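/- arXiv:1902.10577 — 5 statements merged into one kernel-verified Lean document; each statement's English description precedes it below -/
import Mathlib

section
/- Let n ≥ 1 and d ∈ ℕ. There is a constant C = C(n,d) such that for every real polynomial Q in n variables of degree at most d, every x ∈ ℝ^n and all radii 0 < r ≤ R: (i) ‖Q‖_{B(x,R)} ≤ C (R/r)^d ‖Q‖_{B(x,r)} and (ii) ‖Q‖_{B(x,r)} ≤ C (r/R) ‖Q‖_{B(x,R)}. -/
/-!
Restricted to the ray from `x` through `y`, `Q` becomes a one-variable polynomial `p` of degree
at most `d`, and the oscillation on a ball is at most twice the largest deviation from the centre,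
so it suffices to compare `p(T) - p(0)` for `T ∈ [0, R)` and for `T ∈ [0, r)`.
By Lagrange interpolation, a polynomial of degree `≤ d` is bounded by `(d + 1) K ^ d` times its
maximum on `d + 1` nodes of spacing `h`, at points within distance `K h` of all nodes.
Equally spaced nodes in `[0, r)` give the factor `(R / r) ^ d`; the same bound applied to
`(p(t) - p(0)) / t` with nodes in `[R / 2, R)` gives the factor `r / R`.
-/

open MeasureTheory Real Set

/-- `‖Q‖_I = sup_{x,x' ∈ I} |Q(x) − Q(x')|`, the oscillation of a polynomial `Q` on a set `I`. -/
noncomputable def polyOsc (n : ℕ) (Q : MvPolynomial (Fin n) ℝ)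
    (I : Set (EuclideanSpace ℝ (Fin n))) : ℝ :=
  sSup {t : ℝ | ∃ x ∈ I, ∃ x' ∈ I,
    t = |MvPolynomial.eval (fun i => x i) Q - MvPolynomial.eval (fun i => x' i) Q|}

open Polynomial

theorem Polynomial.eval_eq_sum_prod_div {F ι : Type*} [Field F] [DecidableEq ι] {s : Finset ι}
    {v : ι → F} (hvs : Set.InjOn v s) {f : F[X]} (hf : f.degree < s.card) (x : F) :
    f.eval x = ∑ i ∈ s, f.eval (v i) * ∏ j ∈ s.erase i, (x - v j) / (v i - v j) := by
  conv_lhs => rw [Lagrange.eq_interpolate hvs hf]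
  simp only [Lagrange.interpolate_apply, eval_finsetSum, eval_mul, eval_C, Lagrange.basis,
    eval_prod, Lagrange.basisDivisor, eval_sub, eval_X, div_eq_inv_mul]

theorem Polynomial.abs_eval_le_of_lagrange {ι : Type*} [DecidableEq ι] {s : Finset ι}
    {v : ι → ℝ} (hvs : Set.InjOn v s) {f : ℝ[X]} (hf : f.degree < s.card) {x A K : ℝ}
    (hA : ∀ i ∈ s, |f.eval (v i)| ≤ A)
    (hK : ∀ i ∈ s, ∀ j ∈ s, i ≠ j → |x - v j| ≤ K * |v i - v j|) :
    |f.eval x| ≤ s.card * K ^ (s.card - 1) * A := by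
  have hterm : ∀ i ∈ s, |f.eval (v i) * ∏ j ∈ s.erase i, (x - v j) / (v i - v j)| ≤
      A * K ^ (s.card - 1) := by
    intro i hi
    have hratio : ∀ j ∈ s.erase i, |(x - v j) / (v i - v j)| ≤ K := by
      intro j hj
      obtain ⟨hji, hj⟩ := Finset.mem_erase.1 hj
      have hpos : 0 < |v i - v j| :=
        abs_pos.2 (sub_ne_zero.2 fun h => hji (hvs hj hi h.symm))
      rw [abs_div, div_le_iff₀ hpos]
      exact hK i hi j hj (Ne.symm hji)
    rw [abs_mul, Finset.abs_prod, ← Finset.card_erase_of_mem hi, ← Finset.prod_const]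
    exact mul_le_mul (hA i hi) (Finset.prod_le_prod (fun _ _ => abs_nonneg _) hratio)
      (Finset.prod_nonneg fun _ _ => abs_nonneg _) ((abs_nonneg _).trans (hA i hi))
  rw [eval_eq_sum_prod_div hvs hf]
  calc _ ≤ ∑ i ∈ s, |f.eval (v i) * ∏ j ∈ s.erase i, (x - v j) / (v i - v j)| :=
        Finset.abs_sum_le_sum_abs _ _
    _ ≤ ∑ _i ∈ s, A * K ^ (s.card - 1) := Finset.sum_le_sum hterm
    _ = s.card * K ^ (s.card - 1) * A := by rw [Finset.sum_const, nsmul_eq_mul]; ring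

theorem Polynomial.abs_eval_le_of_equallySpaced {f : ℝ[X]} {d : ℕ} (hf : f.natDegree ≤ d)
    {a h x A K : ℝ} (hh : 0 < h) (hA : ∀ i ≤ d, |f.eval (a + i * h)| ≤ A)
    (hx : ∀ j ≤ d, |x - (a + j * h)| ≤ K * h) :
    |f.eval x| ≤ (d + 1) * K ^ d * A := by
  have hK : 0 ≤ K := nonneg_of_mul_nonneg_left ((abs_nonneg _).trans (hx 0 d.zero_le)) hh
  have hsep : ∀ i j : ℕ, i ≠ j → h ≤ |(a + i * h) - (a + j * h)| := by
    intro i j hij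
    have hij' : (1 : ℝ) ≤ |(i : ℝ) - j| := by
      have : (1 : ℤ) ≤ |(i : ℤ) - j| := Int.one_le_abs (sub_ne_zero.2 (by exact_mod_cast hij))
      exact_mod_cast this
    rw [add_sub_add_left_eq_sub, ← sub_mul, abs_mul, abs_of_pos hh]
    nlinarith
  have hinj : Set.InjOn (fun i : ℕ => a + i * h) (Finset.range (d + 1)) :=
    ((add_right_injective a).comp ((mul_left_injective₀ hh.ne').comp Nat.cast_injective)).injOn
  have hdeg : f.degree < (Finset.range (d + 1)).card := by
    rw [Finset.card_range]
    exact (degree_le_of_natDegree_le hf).trans_lt (by exact_mod_cast d.lt_succ_self)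
  have := abs_eval_le_of_lagrange hinj hdeg (x := x) (K := K)
    (fun i hi => hA i (Nat.lt_succ_iff.1 (Finset.mem_range.1 hi)))
    (fun i _ j hj hij => (hx j (Nat.lt_succ_iff.1 (Finset.mem_range.1 hj))).trans
      (mul_le_mul_of_nonneg_left (hsep i j hij) hK))
  simpa using this

theorem natCast_mul_div_add_one_lt {d i : ℕ} (hi : i ≤ d) {L : ℝ} (hL : 0 < L) :
    i * (L / (d + 1)) < L :=
  calc i * (L / (d + 1)) < (d + 1) * (L / (d + 1)) :=
        mul_lt_mul_of_pos_right (by exact_mod_cast Nat.lt_succ_of_le hi) (by positivity)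
    _ = L := by field_simp

theorem Polynomial.abs_eval_sub_eval_zero_le_pow_mul {p : ℝ[X]} {d : ℕ} (hp : p.natDegree ≤ d)
    {r R M T : ℝ} (hr : 0 < r) (hrR : r ≤ R)
    (hM : ∀ t ∈ Ico 0 r, |p.eval t - p.eval 0| ≤ M) (hT : T ∈ Ico 0 R) :
    |p.eval T - p.eval 0| ≤ (d + 1) ^ (d + 1) * (R / r) ^ d * M := by
  have hnode : ∀ i ≤ d, 0 + i * (r / (d + 1)) ∈ Ico 0 r := fun i hi =>
    ⟨by positivity, by rw [zero_add]; exact natCast_mul_div_add_one_lt hi hr⟩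
  have key := abs_eval_le_of_equallySpaced (natDegree_sub_C.trans_le hp) (by positivity)
    (f := p - C (p.eval 0)) (a := 0) (h := r / (d + 1)) (x := T) (A := M)
    (K := (d + 1) * (R / r))
    (fun i hi => by simpa using hM _ (hnode i hi))
    (fun j hj => by
      rw [show (d + 1) * (R / r) * (r / (d + 1)) = R by field_simp]
      exact (abs_sub_lt_of_nonneg_of_lt hT.1 hT.2 (hnode j hj).1
        ((hnode j hj).2.trans_le hrR)).le)
  simp only [eval_sub, eval_C] at key
  exact key.trans_eq (by rw [mul_pow]; ring)

theorem Polynomial.abs_eval_sub_eval_zero_le_mul {p : ℝ[X]} {d : ℕ} (hp : p.natDegree ≤ d)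
    {r R M T : ℝ} (hr : 0 < r) (hrR : r ≤ R)
    (hM : ∀ t ∈ Ico 0 R, |p.eval t - p.eval 0| ≤ M) (hT : T ∈ Ico 0 r) :
    |p.eval T - p.eval 0| ≤ (2 * (d + 1)) ^ (d + 1) * (r / R) * M := by
  have hR : 0 < R := hr.trans_le hrR
  have hdivX : ∀ t, p.eval t - p.eval 0 = t * p.divX.eval t := by
    intro t
    conv_lhs => rw [← divX_mul_X_add p]
    simp [coeff_zero_eq_eval_zero, mul_comm]
  have hnode : ∀ i ≤ d, R / 2 + i * (R / 2 / (d + 1)) ∈ Ico (R / 2) R := fun i hi =>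
    ⟨le_add_of_nonneg_right (by positivity), by
      linarith [natCast_mul_div_add_one_lt hi (half_pos hR)]⟩
  have key := abs_eval_le_of_equallySpaced (natDegree_divX_le.trans hp) (by positivity)
    (a := R / 2) (h := R / 2 / (d + 1)) (x := T) (A := 2 * M / R) (K := 2 * (d + 1))
    (fun i hi => by
      set v := R / 2 + i * (R / 2 / (d + 1))
      have hv : R / 2 ≤ v := (hnode i hi).1
      have hMv := hM v ⟨(half_pos hR).le.trans hv, (hnode i hi).2⟩
      rw [hdivX, abs_mul, abs_of_pos ((half_pos hR).trans_le hv)] at hMv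
      rw [le_div_iff₀ hR]
      linarith [mul_le_mul_of_nonneg_right hv (abs_nonneg (p.divX.eval v))])
    (fun j hj => by
      rw [show 2 * (d + 1) * (R / 2 / (d + 1)) = R by field_simp]
      exact (abs_sub_lt_of_nonneg_of_lt hT.1 (hT.2.trans_le hrR)
        ((half_pos hR).le.trans (hnode j hj).1) (hnode j hj).2).le)
  rw [hdivX, abs_mul, abs_of_nonneg hT.1]
  calc T * |p.divX.eval T| ≤ r * ((d + 1) * (2 * (d + 1)) ^ d * (2 * M / R)) :=
        mul_le_mul hT.2.le key (abs_nonneg _) hr.le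
    _ = (2 * (d + 1)) ^ (d + 1) * (r / R) * M := by field_simp; ring

theorem MvPolynomial.natDegree_aeval_le_totalDegree {R σ : Type*} [CommSemiring R]
    (Q : MvPolynomial σ R) {g : σ → R[X]} (hg : ∀ i, (g i).natDegree ≤ 1) :
    (MvPolynomial.aeval g Q).natDegree ≤ Q.totalDegree := by
  rw [MvPolynomial.aeval_eq_eval₂Hom, MvPolynomial.coe_eval₂Hom, MvPolynomial.eval₂_eq]
  refine natDegree_sum_le_of_forall_le _ _ fun m hm => ?_
  refine (natDegree_C_mul_le _ _).trans <| (natDegree_prod_le _ _).trans ?_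
  calc ∑ i ∈ m.support, (g i ^ m i).natDegree ≤ ∑ i ∈ m.support, m i :=
        Finset.sum_le_sum fun i _ => (natDegree_pow_le_of_le _ (hg i)).trans_eq (mul_one _)
    _ ≤ Q.totalDegree := MvPolynomial.le_totalDegree hm

section polyOsc

variable {n : ℕ} {Q : MvPolynomial (Fin n) ℝ} {I : Set (EuclideanSpace ℝ (Fin n))}

theorem polyOsc_nonneg : 0 ≤ polyOsc n Q I :=
  Real.sSup_nonneg fun _ ⟨_, _, _, _, ht⟩ => ht ▸ abs_nonneg _

theorem abs_sub_le_polyOsc (hI : Bornology.IsBounded I) {a b : EuclideanSpace ℝ (Fin n)}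
    (ha : a ∈ I) (hb : b ∈ I) :
    |MvPolynomial.eval (fun i => a i) Q - MvPolynomial.eval (fun i => b i) Q| ≤
      polyOsc n Q I := by
  have hcont : Continuous fun z : EuclideanSpace ℝ (Fin n) × EuclideanSpace ℝ (Fin n) =>
      |MvPolynomial.eval (fun i => z.1 i) Q - MvPolynomial.eval (fun i => z.2 i) Q| := by
    have hQ := (MvPolynomial.continuous_eval Q).comp (PiLp.continuous_ofLp 2 fun _ : Fin n => ℝ)
    exact ((hQ.comp continuous_fst).sub (hQ.comp continuous_snd)).abs
  refine le_csSup (((hI.isCompact_closure.prod hI.isCompact_closure).bddAbove_image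
    hcont.continuousOn).mono ?_) ⟨a, ha, b, hb, rfl⟩
  rintro _ ⟨a', ha', b', hb', rfl⟩
  exact ⟨(a', b'), ⟨subset_closure ha', subset_closure hb'⟩, rfl⟩

theorem polyOsc_le_two_mul {x : EuclideanSpace ℝ (Fin n)} (hx : x ∈ I) {c : ℝ}
    (hc : ∀ y ∈ I,
      |MvPolynomial.eval (fun i => y i) Q - MvPolynomial.eval (fun i => x i) Q| ≤ c) :
    polyOsc n Q I ≤ 2 * c := by
  refine Real.sSup_le ?_ (by linarith [(abs_nonneg _).trans (hc x hx)])
  rintro _ ⟨a, ha, b, hb, rfl⟩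
  calc _ ≤ |MvPolynomial.eval (fun i => a i) Q - MvPolynomial.eval (fun i => x i) Q| +
        |MvPolynomial.eval (fun i => x i) Q - MvPolynomial.eval (fun i => b i) Q| :=
        abs_sub_le _ _ _
    _ ≤ 2 * c := by
        rw [abs_sub_comm (MvPolynomial.eval (fun i => x i) Q)]
        linarith [hc a ha, hc b hb]

end polyOsc

theorem exists_polynomial_along_ray {n : ℕ} (Q : MvPolynomial (Fin n) ℝ)
    (x y : EuclideanSpace ℝ (Fin n)) :
    ∃ p : ℝ[X], p.natDegree ≤ Q.totalDegree ∧
      p.eval 0 = MvPolynomial.eval (fun i => x i) Q ∧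
      p.eval ‖y - x‖ = MvPolynomial.eval (fun i => y i) Q ∧
      ∀ ρ, ∀ t ∈ Ico 0 ρ, |p.eval t - p.eval 0| ≤ polyOsc n Q (Metric.ball x ρ) := by
  set u := ‖y - x‖⁻¹ • (y - x)
  have hu : ‖u‖ ≤ 1 := by
    rw [norm_smul, norm_inv, norm_norm]
    exact inv_mul_le_one_of_le₀ le_rfl (norm_nonneg _)
  have hyu : x + ‖y - x‖ • u = y := by
    rcases eq_or_ne (y - x) 0 with h | h
    · rw [h, norm_zero, zero_smul, add_zero, eq_comm, ← sub_eq_zero, h]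
    · rw [smul_inv_smul₀ (norm_ne_zero_iff.2 h), add_sub_cancel]
  set p := MvPolynomial.aeval (fun i => C (u i) * X + C (x i)) Q
  have hp : ∀ t, p.eval t = MvPolynomial.eval (fun i => (x + t • u) i) Q := by
    intro t
    rw [← coe_aeval_eq_eval, ← AlgHom.comp_apply, MvPolynomial.comp_aeval,
      MvPolynomial.aeval_eq_eval]
    congr 2
    funext i
    simp only [coe_aeval_eq_eval, eval_add, eval_mul, eval_C, eval_X, PiLp.add_apply,
      PiLp.smul_apply, smul_eq_mul]
    ring
  have hp0 : p.eval 0 = MvPolynomial.eval (fun i => x i) Q := by simp [hp]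
  refine ⟨p, Q.natDegree_aeval_le_totalDegree fun _ => natDegree_linear_le, hp0,
    by rw [hp, hyu], fun ρ t ht => ?_⟩
  have hdist : dist (x + t • u) x ≤ t := by
    rw [dist_eq_norm, add_sub_cancel_left, norm_smul, Real.norm_of_nonneg ht.1]
    exact mul_le_of_le_one_right ht.1 hu
  rw [hp, hp0]
  exact abs_sub_le_polyOsc Metric.isBounded_ball (Metric.mem_ball.2 (hdist.trans_lt ht.2))
    (Metric.mem_ball_self (ht.1.trans_lt ht.2))

section Balls

variable {n d : ℕ} {Q : MvPolynomial (Fin n) ℝ} {x y : EuclideanSpace ℝ (Fin n)} {r R : ℝ}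

theorem abs_eval_sub_eval_center_le_pow_mul_polyOsc (hQ : Q.totalDegree ≤ d) (hr : 0 < r)
    (hrR : r ≤ R) (hy : y ∈ Metric.ball x R) :
    |MvPolynomial.eval (fun i => y i) Q - MvPolynomial.eval (fun i => x i) Q| ≤
      (d + 1) ^ (d + 1) * (R / r) ^ d * polyOsc n Q (Metric.ball x r) := by
  obtain ⟨p, hpd, hp0, hpy, hosc⟩ := exists_polynomial_along_ray Q x y
  rw [← hp0, ← hpy]
  exact abs_eval_sub_eval_zero_le_pow_mul (hpd.trans hQ) hr hrR (hosc r)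
    ⟨norm_nonneg _, by rwa [← dist_eq_norm]⟩

theorem abs_eval_sub_eval_center_le_mul_polyOsc (hQ : Q.totalDegree ≤ d) (hr : 0 < r)
    (hrR : r ≤ R) (hy : y ∈ Metric.ball x r) :
    |MvPolynomial.eval (fun i => y i) Q - MvPolynomial.eval (fun i => x i) Q| ≤
      (2 * (d + 1)) ^ (d + 1) * (r / R) * polyOsc n Q (Metric.ball x R) := by
  obtain ⟨p, hpd, hp0, hpy, hosc⟩ := exists_polynomial_along_ray Q x y
  rw [← hp0, ← hpy]
  exact abs_eval_sub_eval_zero_le_mul (hpd.trans hQ) hr hrR (hosc R)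
    ⟨norm_nonneg _, by rwa [← dist_eq_norm]⟩

end Balls

theorem statement4_general (n d : ℕ) :
    ∃ C : ℝ, 0 < C ∧
      ∀ Q : MvPolynomial (Fin n) ℝ, Q.totalDegree ≤ d →
      ∀ (x : EuclideanSpace ℝ (Fin n)) (r R : ℝ), 0 < r → r ≤ R →
        polyOsc n Q (Metric.ball x R) ≤ C * (R / r) ^ d * polyOsc n Q (Metric.ball x r) ∧
        polyOsc n Q (Metric.ball x r) ≤ C * (r / R) * polyOsc n Q (Metric.ball x R) := by
  refine ⟨2 * (2 * (d + 1)) ^ (d + 1), by positivity, fun Q hQ x r R hr hrR => ⟨?_, ?_⟩⟩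
  · have h0 : 0 ≤ (R / r) ^ d * polyOsc n Q (Metric.ball x r) :=
      mul_nonneg (pow_nonneg (div_nonneg (hr.le.trans hrR) hr.le) _) polyOsc_nonneg
    calc polyOsc n Q (Metric.ball x R)
        ≤ 2 * ((d + 1) ^ (d + 1) * (R / r) ^ d * polyOsc n Q (Metric.ball x r)) :=
          polyOsc_le_two_mul (Metric.mem_ball_self (hr.trans_le hrR)) fun _ hy =>
            abs_eval_sub_eval_center_le_pow_mul_polyOsc hQ hr hrR hy
      _ = 2 * (d + 1) ^ (d + 1) * ((R / r) ^ d * polyOsc n Q (Metric.ball x r)) := by ring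
      _ ≤ 2 * (2 * (d + 1)) ^ (d + 1) * ((R / r) ^ d * polyOsc n Q (Metric.ball x r)) := by
          gcongr
          linarith
      _ = _ := by ring
  · exact (polyOsc_le_two_mul (Metric.mem_ball_self hr) fun _ hy =>
      abs_eval_sub_eval_center_le_mul_polyOsc hQ hr hrR hy).trans_eq (by ring)

/-- doubling estimates for norms of polynomials of degree at most `d` on balls. -/
theorem statement4 (n d : ℕ) (hn : 1 ≤ n) :
    ∃ C : ℝ, 0 < C ∧
      ∀ Q : MvPolynomial (Fin n) ℝ, Q.totalDegree ≤ d →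
      ∀ (x : EuclideanSpace ℝ (Fin n)) (r R : ℝ), 0 < r → r ≤ R →
        polyOsc n Q (Metric.ball x R) ≤ C * (R / r) ^ d * polyOsc n Q (Metric.ball x r) ∧
        polyOsc n Q (Metric.ball x r) ≤ C * (r / R) * polyOsc n Q (Metric.ball x R) :=
  statement4_general n d
end

section
/- Let n ≥ 1, D ∈ ℕ, and let γ ∈ ℕ^n be a multiindex with |γ| = γ_1 + ⋯ + γ_n ≤ D. Let t = (t_1,…,t_n) and x_j = (x_{j,1},…,x_{j,n}) for j = 0, …, D be n-tuples of formal variables. Then there exist polynomials p_{0,γ}, …, p_{D,γ} with integer coefficients in the n(D+1) variables (x_0, …, x_D) such that the identity of polynomials t^γ = p_{0,γ}(x_0, x_1, …, x_D) + p_{1,γ}(x_0, x_1 + t, x_2, …, x_D) + p_{2,γ}(x_0, x_1, x_2 + t, x_3, …, x_D) + ⋯ + p_{D,γ}(x_0, …, x_{D−1}, x_D + t) holds in the polynomial ring ℤ[t, x_0, …, x_D], where x_j + t denotes componentwise addition and t^γ = t_1^{γ_1} ⋯ t_n^{γ_n}. -/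
open MvPolynomial

/-!
Write a monomial as `t^s = ∏_{r ∈ s} t_{c r}` over a finite set `s` and induct on `m = |s|`,
showing more generally that `q · t^s` lies in the sum of the images of the substitutions whenever
`q ∈ ℤ[x]` does not involve `x_1, …, x_m`. For `m = 0` take `j = 0`. For `m ≥ 1` the substitution
`x_m ↦ x_m + t` sends `q · x_m^s` to `q · (x_m + t)^s = q · t^s + ∑_{u ⊊ s} q · x_m^{s \ u} · t^u`,
and each term of the sum is covered by induction, since `q · x_m^{s \ u}` does not involve
`x_1, …, x_{|u|}`.
-/

namespace ShiftedVariables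

variable (R : Type*) [CommRing R] {τ : Type*} (D : ℕ)

noncomputable def shiftAt (j : Fin (D + 1)) :
    MvPolynomial (Fin (D + 1) × τ) R →ₐ[R] MvPolynomial (τ ⊕ Fin (D + 1) × τ) R :=
  aeval fun v => X (Sum.inr v) + if v.1 = j ∧ (j : ℕ) ≠ 0 then X (Sum.inl v.2) else 0

noncomputable def shiftSum :
    (Fin (D + 1) → MvPolynomial (Fin (D + 1) × τ) R) →ₗ[R]
      MvPolynomial (τ ⊕ Fin (D + 1) × τ) R :=
  LinearMap.lsum R _ R fun j => (shiftAt R D j).toLinearMap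

def blocksOutsideIcc (k : ℕ) : Set (Fin (D + 1) × τ) := {v | (v.1 : ℕ) = 0 ∨ k < v.1}

variable {R D}

theorem shiftAt_zero : shiftAt R D 0 = rename (Sum.inr : Fin (D + 1) × τ → τ ⊕ _) := by
  ext v
  simp [shiftAt]

theorem shiftAt_eq_rename_of_mem_supported {j : Fin (D + 1)}
    {p : MvPolynomial (Fin (D + 1) × τ) R} (hp : p ∈ supported R {v | v.1 ≠ j}) : shiftAt R D j p = rename Sum.inr p := by
  rw [supported_eq_range_rename] at hp
  obtain ⟨p, rfl⟩ := (AlgHom.mem_range _).1 hp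
  rw [shiftAt, aeval_rename, rename_rename, rename_eq_aeval]
  refine congrArg (aeval · p) (funext fun v => ?_)
  simp [show (v : Fin (D + 1) × τ).1 ≠ j from v.2]

theorem shiftAt_mem_range_shiftSum (j : Fin (D + 1)) (p : MvPolynomial (Fin (D + 1) × τ) R) :
    shiftAt R D j p ∈ LinearMap.range (shiftSum R D) :=
  ⟨Pi.single j p, LinearMap.lsum_piSingle ..⟩

theorem shiftSum_apply (p : Fin (D + 1) → MvPolynomial (Fin (D + 1) × τ) R) :
    shiftSum R D p = ∑ j, shiftAt R D j (p j) := by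
  simp [shiftSum]

theorem blocksOutsideIcc_antitone : Antitone (blocksOutsideIcc D (τ := τ)) :=
  fun _ _ hkl _ hv => hv.imp_right hkl.trans_lt

theorem shiftAt_mul_prod_X {j : Fin (D + 1)} (hj : (j : ℕ) ≠ 0) {ι : Type*} [DecidableEq ι]
    (c : ι → τ) (s : Finset ι) {p : MvPolynomial (Fin (D + 1) × τ) R}
    (hp : p ∈ supported R {v | v.1 ≠ j}) :
    shiftAt R D j (p * ∏ r ∈ s, X (j, c r)) =
      ∑ u ∈ s.powerset, rename Sum.inr (p * ∏ r ∈ s \ u, X (j, c r)) *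
        ∏ r ∈ u, X (Sum.inl (c r)) := by
  calc shiftAt R D j (p * ∏ r ∈ s, X (j, c r))
      = rename Sum.inr p * ∏ r ∈ s, (X (Sum.inl (c r)) + X (Sum.inr (j, c r))) := by
        rw [map_mul, map_prod, shiftAt_eq_rename_of_mem_supported hp]
        simp [shiftAt, hj, add_comm]
    _ = _ := by
        rw [Finset.prod_add, Finset.mul_sum]
        refine Finset.sum_congr rfl fun u _ => ?_
        simp only [map_mul, map_prod, rename_X]
        ring

theorem rename_mul_prod_X_mem_range_shiftSum {ι : Type*} (c : ι → τ) (s : Finset ι)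
    (hs : s.card ≤ D) {p : MvPolynomial (Fin (D + 1) × τ) R}
    (hp : p ∈ supported R (blocksOutsideIcc D s.card)) :
    rename Sum.inr p * ∏ r ∈ s, X (Sum.inl (c r)) ∈ LinearMap.range (shiftSum R D) := by
  classical
  induction s using Finset.strongInduction generalizing p with
  | H s ih =>
  rcases s.eq_empty_or_nonempty with rfl | hne
  · simpa [← shiftAt_zero] using shiftAt_mem_range_shiftSum 0 p
  set j : Fin (D + 1) := ⟨s.card, by omega⟩
  have hj : (j : ℕ) ≠ 0 := hne.card_pos.ne'
  have hp_j : p ∈ supported R {v | v.1 ≠ j} := by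
    refine supported_mono (fun v hv hvj => ?_) hp
    have : (v.1 : ℕ) = s.card := congrArg Fin.val hvj
    rcases hv with h | h <;> omega
  have expand := shiftAt_mul_prod_X hj c s hp_j
  rw [← Finset.add_sum_erase _ _ (Finset.mem_powerset_self s), Finset.sdiff_self,
    Finset.prod_empty, mul_one] at expand
  rw [eq_sub_of_add_eq expand.symm]
  refine sub_mem (shiftAt_mem_range_shiftSum j _) (sum_mem fun u hu => ?_)
  obtain ⟨hus, hu⟩ : u ⊂ s := by
    simpa [Finset.ssubset_iff_subset_ne, and_comm] using hu
  have hlt : u.card < s.card := Finset.card_lt_card ⟨hus, hu⟩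
  refine ih u ⟨hus, hu⟩ (by omega) (Subalgebra.mul_mem _ ?_ (Subalgebra.prod_mem _ fun r _ => ?_))
  · exact supported_mono (blocksOutsideIcc_antitone hlt.le) hp
  · exact Algebra.subset_adjoin ⟨_, Or.inr hlt, rfl⟩

end ShiftedVariables

open ShiftedVariables in
theorem statement5_general (n D : ℕ) (γ : Fin n → ℕ) (hγ : (∑ i, γ i) ≤ D) :
    ∃ p : Fin (D + 1) → MvPolynomial (Fin (D + 1) × Fin n) ℤ,
      (∏ i, (X (Sum.inl i) : MvPolynomial (Fin n ⊕ Fin (D + 1) × Fin n) ℤ) ^ γ i)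
        = ∑ j : Fin (D + 1),
            MvPolynomial.aeval
              (fun v : Fin (D + 1) × Fin n =>
                (X (Sum.inr v) : MvPolynomial (Fin n ⊕ Fin (D + 1) × Fin n) ℤ) +
                  if v.1 = j ∧ (j : ℕ) ≠ 0 then X (Sum.inl v.2) else 0)
              (p j) := by
  have hprod : ∏ i, (X (Sum.inl i) : MvPolynomial (Fin n ⊕ Fin (D + 1) × Fin n) ℤ) ^ γ i =
      rename Sum.inr 1 * ∏ r : Σ i, Fin (γ i), X (Sum.inl r.1) := by
    simp [Fintype.prod_sigma]
  obtain ⟨p, hp⟩ := rename_mul_prod_X_mem_range_shiftSum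
    (Sigma.fst : (Σ i, Fin (γ i)) → Fin n) Finset.univ
    (by simpa using hγ) (one_mem (supported ℤ _))
  exact ⟨p, by rw [hprod, ← hp, shiftSum_apply]; rfl⟩

/-- entangling a monomial `t^γ` of degree `|γ| ≤ D` into polynomials of the shifted
variables, as an identity in `ℤ[t, x_0, …, x_D]` where `t` and each `x_j` are `n`-tuples of
variables.  The variable `t_i` is `X (Sum.inl i)` and the variable `x_{j,i}` is
`X (Sum.inr (j, i))`. -/
theorem statement5 (n D : ℕ) (hn : 1 ≤ n) (γ : Fin n → ℕ) (hγ : (∑ i, γ i) ≤ D) :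
    ∃ p : Fin (D + 1) → MvPolynomial (Fin (D + 1) × Fin n) ℤ,
      (∏ i, (X (Sum.inl i) : MvPolynomial (Fin n ⊕ Fin (D + 1) × Fin n) ℤ) ^ γ i)
        = ∑ j : Fin (D + 1),
            MvPolynomial.aeval
              (fun v : Fin (D + 1) × Fin n =>
                (X (Sum.inr v) : MvPolynomial (Fin n ⊕ Fin (D + 1) × Fin n) ℤ) +
                  if v.1 = j ∧ (j : ℕ) ≠ 0 then X (Sum.inl v.2) else 0)
              (p j) :=
  statement5_general n D γ hγ
end

section
/- Let n ≥ 1, 0 ≤ α < 1/2 and 0 < ν ≤ 1. There is a constant C = C(n,α) such that for every measurable set G ⊂ ℝ^n, setting G̃ = {x : M 1_G(x) > ν}, and every f ∈ L²(ℝ^n): ‖1_G · M(1_{ℝ^n∖G̃} f)‖_{L²} ≤ C ν^α ‖f‖_{L²} and ‖1_{ℝ^n∖G̃} · M(1_G f)‖_{L²} ≤ C ν^α ‖f‖_{L²}. -/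
/-!
Both estimates are instances of one localized strong-type bound `∫_S (M u)² ≤ 8 a κ 5ⁿ ‖u‖₂²`,
proved as in the Marcinkiewicz argument. Suppose `u` vanishes off `A`, `A` has density at most `a`
in every cube through a point of `S`, and `S` has density at most `κ` in `5Q` for every cube `Q`
on which `u` has mass. If `⨍_Q |u| > t` for a cube `Q` through a point of `S`, the part of `u`
where `2 a |u| ≤ t` contributes at most `t / 2` to that average, so
`(t/2)|Q| ≤ ∫_Q |u| 1_{2a|u|>t}`.
A Vitali subfamily of these cubes gives `(t/2) |{M u > t} ∩ S| ≤ κ 5ⁿ ∫ |u| 1_{2a|u|>t}`, and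
integrating against `2t dt` gives the bound.

For `u = 1_{G̃ᶜ} f` and `S = G`, a cube on which `u` has mass meets `G̃ᶜ`, where `M 1_G ≤ ν`; so
`κ = ν` and `a = 1`. For `u = 1_G f` and `S = G̃ᶜ`, every cube through a point of `S` has
`G`-density at most `ν`; so `a = ν` and `κ = 1`. Finally `√ν ≤ ν^α` because `ν ≤ 1`.
-/

open MeasureTheory Real Set
open scoped ENNReal NNReal

/-- The Hardy–Littlewood maximal operator over axis-parallel cubes. -/
noncomputable def hlMax (n : ℕ) (f : EuclideanSpace ℝ (Fin n) → ℂ)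
    (x : EuclideanSpace ℝ (Fin n)) : ℝ≥0∞ :=
  ⨆ (c : EuclideanSpace ℝ (Fin n)) (r : ℝ) (_ : 0 < r) (_ : ∀ i, |x i - c i| ≤ r),
    (volume {y : EuclideanSpace ℝ (Fin n) | ∀ i, |y i - c i| ≤ r})⁻¹ *
      ∫⁻ y in {y : EuclideanSpace ℝ (Fin n) | ∀ i, |y i - c i| ≤ r}, (‖f y‖₊ : ℝ≥0∞)

namespace CubeMaximal

lemma setOf_ofReal_lt_inter_Ioi {b : ℝ≥0∞} (hb : b ≠ ⊤) :
    {l : ℝ | ENNReal.ofReal l < b} ∩ Ioi 0 = Ioo 0 b.toReal := by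
  ext l
  simp only [mem_inter_iff, mem_ofPred_eq, mem_Ioi, mem_Ioo]
  exact ⟨fun h => ⟨h.2, (ENNReal.ofReal_lt_iff_lt_toReal h.2.le hb).1 h.1⟩,
    fun h => ⟨(ENNReal.ofReal_lt_iff_lt_toReal h.1.le hb).2 h.2, h.1⟩⟩

lemma volume_setOf_ofReal_lt_inter_Ioi (b : ℝ≥0∞) :
    volume ({l : ℝ | ENNReal.ofReal l < b} ∩ Ioi 0) = b := by
  rcases eq_or_ne b ⊤ with rfl | hb
  · simp
  · simp [setOf_ofReal_lt_inter_Ioi hb, hb]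

lemma lintegral_Ioi_indicator_two_mul_eq_sq (a : ℝ≥0∞) :
    ∫⁻ l in Ioi (0 : ℝ), {l | ENNReal.ofReal l < a}.indicator (fun l => 2 * ENNReal.ofReal l) l =
      a ^ 2 := by
  rw [lintegral_indicator (measurableSet_lt ENNReal.measurable_ofReal measurable_const),
    Measure.restrict_restrict (measurableSet_lt ENNReal.measurable_ofReal measurable_const)]
  rcases eq_or_ne a ⊤ with rfl | ha
  · refine top_unique ?_
    calc (⊤ : ℝ≥0∞) ^ 2 = ∫⁻ l in Ioi (1 : ℝ), 2 := by simp [ENNReal.mul_top]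
      _ ≤ ∫⁻ l in Ioi (1 : ℝ), 2 * ENNReal.ofReal l := by
        refine setLIntegral_mono (by fun_prop) fun l hl => ?_
        simpa using mul_le_mul_right (ENNReal.one_le_ofReal.2 (le_of_lt hl)) 2
      _ ≤ _ := by
        simp only [ENNReal.ofReal_lt_top, ofPred_true, univ_inter]
        exact lintegral_mono_set (Ioi_subset_Ioi zero_le_one)
  · rw [setOf_ofReal_lt_inter_Ioi ha]
    calc ∫⁻ l in Ioo 0 a.toReal, 2 * ENNReal.ofReal l
        = ∫⁻ l in Ioo 0 a.toReal, ENNReal.ofReal (2 * l) := by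
          simp [ENNReal.ofReal_mul]
      _ = ENNReal.ofReal (∫ l in Ioo 0 a.toReal, 2 * l) := by
          rw [ofReal_integral_eq_lintegral_ofReal]
          · exact (continuous_const_mul 2).integrableOn_Icc.mono_set Ioo_subset_Icc_self
          · exact (ae_restrict_iff' measurableSet_Ioo).2 (ae_of_all _ fun l hl => by
              simp only [Pi.zero_apply]; linarith [hl.1])
      _ = a ^ 2 := by
          rw [← integral_Ioc_eq_integral_Ioo,
            ← intervalIntegral.integral_of_le ENNReal.toReal_nonneg,
            intervalIntegral.integral_const_mul, integral_id,
            show 2 * ((a.toReal ^ 2 - 0 ^ 2) / 2) = a.toReal ^ 2 by ring,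
            ENNReal.ofReal_pow ENNReal.toReal_nonneg, ENNReal.ofReal_toReal ha]

section LayerCake

variable {α : Type*} [MeasurableSpace α]

lemma measurable_indicator_ofReal_lt {f : α → ℝ≥0∞} (hf : Measurable f) (b : ℝ≥0∞) :
    Measurable fun p : ℝ × α => {y | ENNReal.ofReal p.1 < b * f y}.indicator f p.2 :=
  Measurable.indicator (f := fun p : ℝ × α => f p.2) (by fun_prop)
    (measurableSet_lt (by fun_prop) (measurable_const.mul (hf.comp measurable_snd)))

lemma lintegral_indicator_lt_ne_top {μ : Measure α} {f : α → ℝ≥0∞} (hf : ∫⁻ y, f y ^ 2 ∂μ ≠ ⊤)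
    {t b : ℝ≥0∞} (ht : t ≠ 0) (hb : b ≠ ⊤) :
    ∫⁻ y, {y | t < b * f y}.indicator f y ∂μ ≠ ⊤ := by
  have hle (y : α) : {y | t < b * f y}.indicator f y ≤ t⁻¹ * b * f y ^ 2 := by
    by_cases hy : t < b * f y
    · rw [indicator_of_mem (show y ∈ {y | t < b * f y} from hy)]
      calc f y = t⁻¹ * t * f y := by rw [ENNReal.inv_mul_cancel ht (ne_top_of_lt hy), one_mul]
        _ ≤ t⁻¹ * (b * f y) * f y := by gcongr
        _ = t⁻¹ * b * f y ^ 2 := by ring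
    · rw [indicator_of_notMem (show y ∉ {y | t < b * f y} from hy)]; exact zero_le
  have hc : t⁻¹ * b ≠ ⊤ := ENNReal.mul_ne_top (ENNReal.inv_ne_top.2 ht) hb
  refine ne_top_of_le_ne_top ?_ ((lintegral_mono hle).trans_eq (lintegral_const_mul' _ _ hc))
  exact ENNReal.mul_ne_top hc hf

lemma eLpNorm_two_sq {ε : Type*} [ENorm ε] (μ : Measure α) (f : α → ε) :
    eLpNorm f 2 μ ^ 2 = ∫⁻ x, ‖f x‖ₑ ^ 2 ∂μ := by
  simpa [ENNReal.rpow_two] using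
    eLpNorm_nnreal_pow_eq_lintegral (f := f) (μ := μ) (p := 2) two_ne_zero

variable (μ : Measure α) [SFinite μ]

theorem lintegral_sq_eq_lintegral_meas_lt {g : α → ℝ≥0∞} (hg : Measurable g) :
    ∫⁻ x, g x ^ 2 ∂μ = ∫⁻ l in Ioi 0, 2 * ENNReal.ofReal l * μ {x | ENNReal.ofReal l < g x} := by
  have hmeas : Measurable fun p : α × ℝ =>
      {l | ENNReal.ofReal l < g p.1}.indicator (fun l => 2 * ENNReal.ofReal l) p.2 :=
    Measurable.indicator (f := fun p : α × ℝ => 2 * ENNReal.ofReal p.2) (by fun_prop)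
      (measurableSet_lt (by fun_prop) (hg.comp measurable_fst))
  simp_rw [← lintegral_Ioi_indicator_two_mul_eq_sq]
  rw [lintegral_lintegral_swap hmeas.aemeasurable]
  refine lintegral_congr fun l => ?_
  rw [← lintegral_indicator_const (measurableSet_lt measurable_const hg)]
  rfl

theorem lintegral_Ioi_lintegral_indicator_lt {f : α → ℝ≥0∞} (hf : Measurable f) (b : ℝ≥0∞) :
    ∫⁻ l in Ioi 0, ∫⁻ y, {y | ENNReal.ofReal l < b * f y}.indicator f y ∂μ =
      b * ∫⁻ y, f y ^ 2 ∂μ := by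
  rw [lintegral_lintegral_swap (measurable_indicator_ofReal_lt hf b).aemeasurable,
    ← lintegral_const_mul _ (by fun_prop)]
  refine lintegral_congr fun y => ?_
  change ∫⁻ l in Ioi 0, {l : ℝ | ENNReal.ofReal l < b * f y}.indicator (fun _ => f y) l = _
  rw [lintegral_indicator_const (measurableSet_lt ENNReal.measurable_ofReal measurable_const),
    Measure.restrict_apply (measurableSet_lt ENNReal.measurable_ofReal measurable_const),
    volume_setOf_ofReal_lt_inter_Ioi]
  ring

end LayerCake

variable {n : ℕ}

def cube (c : EuclideanSpace ℝ (Fin n)) (r : ℝ) : Set (EuclideanSpace ℝ (Fin n)) :=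
  {y | ∀ i, |y i - c i| ≤ r}

lemma cube_eq_preimage (c : EuclideanSpace ℝ (Fin n)) (r : ℝ) :
    cube c r = (MeasurableEquiv.toLp 2 (Fin n → ℝ)).symm ⁻¹'
      Set.univ.pi fun i => Icc (c i - r) (c i + r) := by
  ext y
  refine forall_congr' fun i => ?_
  change |y i - c i| ≤ r ↔ i ∈ univ → c i - r ≤ y i ∧ y i ≤ c i + r
  rw [abs_le, forall_prop_of_true (mem_univ i)]
  constructor <;> rintro ⟨h₁, h₂⟩ <;> constructor <;> linarith

lemma measurableSet_cube (c : EuclideanSpace ℝ (Fin n)) (r : ℝ) : MeasurableSet (cube c r) := by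
  rw [cube_eq_preimage]
  exact (MeasurableEquiv.measurable _) (MeasurableSet.univ_pi fun _ => measurableSet_Icc)

lemma volume_cube (c : EuclideanSpace ℝ (Fin n)) (r : ℝ) :
    volume (cube c r) = ENNReal.ofReal (2 * r) ^ n := by
  rw [cube_eq_preimage,
    (EuclideanSpace.volume_preserving_symm_measurableEquiv_toLp (Fin n)).measure_preimage
      (MeasurableSet.univ_pi fun _ => measurableSet_Icc).nullMeasurableSet, volume_pi_pi]
  have hside (i : Fin n) : volume (Icc (c i - r) (c i + r)) = ENNReal.ofReal (2 * r) := by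
    rw [Real.volume_Icc]; ring_nf
  simp [hside]

lemma volume_cube_pos (c : EuclideanSpace ℝ (Fin n)) {r : ℝ} (hr : 0 < r) :
    0 < volume (cube c r) := by
  rw [volume_cube]
  exact ENNReal.pow_pos (by simpa using hr) n

lemma volume_cube_ne_top (c : EuclideanSpace ℝ (Fin n)) (r : ℝ) : volume (cube c r) ≠ ⊤ := by
  rw [volume_cube]
  exact ENNReal.pow_ne_top ENNReal.ofReal_ne_top

lemma cube_mono (c : EuclideanSpace ℝ (Fin n)) {r s : ℝ} (h : r ≤ s) : cube c r ⊆ cube c s :=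
  fun _ hy i => (hy i).trans h

lemma mem_cube_self (c : EuclideanSpace ℝ (Fin n)) {r : ℝ} (hr : 0 ≤ r) : c ∈ cube c r :=
  fun _ => by simpa using hr

variable {f g : EuclideanSpace ℝ (Fin n) → ℂ} {x c : EuclideanSpace ℝ (Fin n)} {r : ℝ}

lemma le_hlMax (hr : 0 < r) (hx : x ∈ cube c r) :
    (volume (cube c r))⁻¹ * ∫⁻ y in cube c r, ‖f y‖ₑ ≤ hlMax n f x :=
  le_iSup_of_le c <| le_iSup_of_le r <| le_iSup_of_le hr <| le_iSup_of_le hx le_rfl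

lemma exists_cube_of_lt_hlMax {t : ℝ≥0∞} (h : t < hlMax n f x) :
    ∃ c r, 0 < r ∧ x ∈ cube c r ∧ t < (volume (cube c r))⁻¹ * ∫⁻ y in cube c r, ‖f y‖ₑ := by
  simp only [hlMax, lt_iSup_iff] at h
  obtain ⟨c, r, hr, hx, h⟩ := h
  exact ⟨c, r, hr, hx, h⟩

lemma hlMax_congr_ae (h : f =ᵐ[volume] g) : hlMax n f = hlMax n g := by
  funext x
  simp only [hlMax]
  congr! 6 with c r
  congr 1
  exact lintegral_congr_ae (ae_restrict_of_ae (h.mono fun y hy => by simp [hy]))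

lemma lowerSemicontinuous_hlMax (f : EuclideanSpace ℝ (Fin n) → ℂ) :
    LowerSemicontinuous (hlMax n f) := by
  intro x t ht
  obtain ⟨c, r, hr, hx, hlt⟩ := exists_cube_of_lt_hlMax ht
  set I := ∫⁻ y in cube c r, ‖f y‖ₑ
  -- Enlarging the cube slightly barely changes its volume, and the enlarged cube contains a
  -- ball around `x`.
  have hcont : ContinuousAt (fun s => (volume (cube c s))⁻¹ * I) r := by
    simp only [volume_cube]
    refine ENNReal.Tendsto.mul_const ?_ (Or.inl (ENNReal.inv_ne_zero.2 ?_))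
    · exact (continuous_inv.comp ((ENNReal.continuous_pow n).comp
        (ENNReal.continuous_ofReal.comp (continuous_const_mul 2)))).continuousAt
    · exact ENNReal.pow_ne_top ENNReal.ofReal_ne_top
  obtain ⟨δ, hδ, hball⟩ := Metric.eventually_nhds_iff.1 (hcont.eventually (lt_mem_nhds hlt))
  filter_upwards [Metric.ball_mem_nhds x (half_pos hδ)] with x' hx'
  have hx'c : x' ∈ cube c (r + δ / 2) := fun i => by
    have h₁ := PiLp.norm_apply_le (x' - x) i
    rw [PiLp.sub_apply, Real.norm_eq_abs, ← dist_eq_norm] at h₁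
    have h₂ := abs_sub_le (x' i) (x i) (c i)
    linarith [hx i, Metric.mem_ball.1 hx']
  calc t < (volume (cube c (r + δ / 2)))⁻¹ * I :=
        hball (by rw [Real.dist_eq, abs_of_pos (by linarith)]; linarith)
    _ ≤ (volume (cube c (r + δ / 2)))⁻¹ * ∫⁻ y in cube c (r + δ / 2), ‖f y‖ₑ := by
        exact mul_le_mul_right (lintegral_mono_set (cube_mono c (by linarith))) _
    _ ≤ hlMax n f x' := le_hlMax (by linarith) hx'c

lemma measurable_hlMax (f : EuclideanSpace ℝ (Fin n) → ℂ) : Measurable (hlMax n f) :=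
  (lowerSemicontinuous_hlMax f).measurable

lemma volume_inter_cube_le_of_hlMax_indicator_le {G : Set (EuclideanSpace ℝ (Fin n))}
    (hG : MeasurableSet G) {ν : ℝ≥0∞} (hr : 0 < r) (hx : x ∈ cube c r)
    (hν : hlMax n (G.indicator fun _ => (1 : ℂ)) x ≤ ν) :
    volume (G ∩ cube c r) ≤ ν * volume (cube c r) := by
  have h := (le_hlMax hr hx).trans hν
  simp only [enorm_indicator_eq_indicator_enorm, enorm_one] at h
  rw [← Pi.one_def, lintegral_indicator_one hG, Measure.restrict_apply hG] at h
  rwa [ENNReal.inv_mul_le_iff (volume_cube_pos c hr).ne' (volume_cube_ne_top c r), mul_comm] at h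

lemma volume_cube_mul (c : EuclideanSpace ℝ (Fin n)) {k : ℝ} (hk : 0 ≤ k) (r : ℝ) :
    volume (cube c (k * r)) = ENNReal.ofReal k ^ n * volume (cube c r) := by
  rw [volume_cube, volume_cube, ← mul_pow, ← ENNReal.ofReal_mul hk, mul_left_comm]

lemma cube_subset_cube_of_inter_nonempty {c b : EuclideanSpace ℝ (Fin n)} {s : ℝ}
    (h : (cube c r ∩ cube b s).Nonempty) (hrs : r ≤ 2 * s) : cube c r ⊆ cube b (5 * s) := by
  obtain ⟨z, hzc, hzb⟩ := h
  intro y hy i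
  have h₁ := abs_sub_le (y i) (c i) (b i)
  have h₂ := abs_sub_le (c i) (z i) (b i)
  rw [abs_sub_comm (c i) (z i)] at h₂
  linarith [hy i, hzc i, hzb i]

lemma le_max_one_pow (a : ℝ) (hn : n ≠ 0) : a ≤ max 1 (a ^ n) := by
  rcases le_or_gt a 1 with h | h
  · exact h.trans (le_max_left _ _)
  · exact (le_self_pow₀ h.le hn).trans (le_max_right _ _)

lemma le_max_one_toReal_of_volume_cube_le (hn : n ≠ 0) {K : ℝ≥0∞} (hK : K ≠ ⊤) (hr : 0 ≤ r)
    (h : volume (cube c r) ≤ K) : r ≤ max 1 K.toReal := by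
  rw [volume_cube, ← ENNReal.ofReal_pow (by positivity), ENNReal.ofReal_le_iff_le_toReal hK] at h
  calc r ≤ 2 * r := by linarith
    _ ≤ max 1 ((2 * r) ^ n) := le_max_one_pow _ hn
    _ ≤ max 1 K.toReal := max_le_max le_rfl h

lemma countable_of_pairwiseDisjoint_cube {𝒟 : Set (EuclideanSpace ℝ (Fin n) × ℝ)}
    (hdisj : 𝒟.PairwiseDisjoint fun a => cube a.1 a.2) (hpos : ∀ a ∈ 𝒟, 0 < a.2) :
    𝒟.Countable := by
  have h := Measure.countable_meas_pos_of_disjoint_iUnion (μ := volume)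
    (fun b : 𝒟 => measurableSet_cube b.1.1 b.1.2)
    (fun i j hij => hdisj i.2 j.2 (Subtype.coe_injective.ne hij))
  simp only [volume_cube_pos _ (hpos _ (Subtype.prop _)), ofPred_true, countable_univ_iff] at h
  exact countable_coe_iff.1 h

lemma mul_volume_inter_five_mul_cube_le {w : EuclideanSpace ℝ (Fin n) → ℝ≥0∞} {t κ : ℝ≥0∞}
    {S : Set (EuclideanSpace ℝ (Fin n))} (hmean : t * volume (cube c r) ≤ ∫⁻ y in cube c r, w y)
    (hdens : volume (S ∩ cube c (5 * r)) ≤ κ * volume (cube c (5 * r))) :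
    t * volume (S ∩ cube c (5 * r)) ≤ κ * 5 ^ n * ∫⁻ y in cube c r, w y :=
  calc t * volume (S ∩ cube c (5 * r)) ≤ t * (κ * volume (cube c (5 * r))) := by gcongr
    _ = κ * 5 ^ n * (t * volume (cube c r)) := by
        rw [volume_cube_mul _ (by norm_num : (0 : ℝ) ≤ 5), ENNReal.ofReal_ofNat]; ring
    _ ≤ κ * 5 ^ n * ∫⁻ y in cube c r, w y := by gcongr

theorem mul_volume_inter_le_of_forall_cube (hn : n ≠ 0) {w : EuclideanSpace ℝ (Fin n) → ℝ≥0∞}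
    (hw : ∫⁻ y, w y ≠ ⊤) {t κ : ℝ≥0∞} (ht : t ≠ 0) {E S : Set (EuclideanSpace ℝ (Fin n))}
    (hE : ∀ x ∈ E ∩ S, ∃ c r, 0 < r ∧ x ∈ cube c r ∧ t * volume (cube c r) ≤ ∫⁻ y in cube c r, w y ∧
      volume (S ∩ cube c (5 * r)) ≤ κ * volume (cube c (5 * r))) :
    t * volume (E ∩ S) ≤ κ * 5 ^ n * ∫⁻ y, w y := by
  set 𝒞 : Set (EuclideanSpace ℝ (Fin n) × ℝ) := {a | 0 < a.2 ∧
    t * volume (cube a.1 a.2) ≤ ∫⁻ y in cube a.1 a.2, w y ∧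
    volume (S ∩ cube a.1 (5 * a.2)) ≤ κ * volume (cube a.1 (5 * a.2))}
  have hbound : ∀ a ∈ 𝒞, a.2 ≤ max 1 ((∫⁻ y, w y) / t).toReal := fun a ha =>
    le_max_one_toReal_of_volume_cube_le hn (ENNReal.div_ne_top hw ht) ha.1.le <|
      (ENNReal.le_div_iff_mul_le (Or.inl ht) (Or.inr hw)).2 <| by
        rw [mul_comm]; exact ha.2.1.trans (setLIntegral_le_lintegral _ _)
  obtain ⟨𝒟, h𝒟𝒞, hdisj, hcover⟩ := Vitali.exists_disjoint_subfamily_covering_enlargement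
    (fun a => cube a.1 a.2) 𝒞 (·.2) 2 one_lt_two (fun a ha => ha.1.le) _ hbound
    (fun a ha => ⟨a.1, mem_cube_self a.1 ha.1.le⟩)
  have hcount : 𝒟.Countable := countable_of_pairwiseDisjoint_cube hdisj fun a ha => (h𝒟𝒞 ha).1
  have : Countable 𝒟 := hcount.to_subtype
  have hsub : E ∩ S ⊆ ⋃ b ∈ 𝒟, S ∩ cube b.1 (5 * b.2) := by
    intro x hx
    obtain ⟨c, r, hr, hxc, hmean, hdens⟩ := hE x hx
    obtain ⟨b, hb, hne, hrb⟩ := hcover (c, r) ⟨hr, hmean, hdens⟩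
    exact mem_biUnion hb ⟨hx.2, cube_subset_cube_of_inter_nonempty hne hrb hxc⟩
  calc t * volume (E ∩ S) ≤ t * ∑' b : 𝒟, volume (S ∩ cube b.1.1 (5 * b.1.2)) := by
        gcongr
        exact (measure_mono hsub).trans (measure_biUnion_le _ hcount _)
    _ ≤ ∑' b : 𝒟, κ * 5 ^ n * ∫⁻ y in cube b.1.1 b.1.2, w y := by
        rw [← ENNReal.tsum_mul_left]
        exact ENNReal.tsum_le_tsum fun b =>
          mul_volume_inter_five_mul_cube_le (h𝒟𝒞 b.2).2.1 (h𝒟𝒞 b.2).2.2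
    _ = κ * 5 ^ n * ∫⁻ y in ⋃ b : 𝒟, cube b.1.1 b.1.2, w y := by
        rw [ENNReal.tsum_mul_left, lintegral_iUnion (fun b : 𝒟 => measurableSet_cube _ _)
          (fun i j hij => hdisj i.2 j.2 (Subtype.coe_injective.ne hij))]
    _ ≤ κ * 5 ^ n * ∫⁻ y, w y := by gcongr; exact Measure.restrict_le_self

section StrongType

variable {u : EuclideanSpace ℝ (Fin n) → ℂ} {S A : Set (EuclideanSpace ℝ (Fin n))} {a κ t : ℝ≥0∞}

lemma enorm_le_indicator_lt_add (huA : ∀ y ∉ A, u y = 0) (ha0 : a ≠ 0) (ha : a ≠ ⊤)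
    (y : EuclideanSpace ℝ (Fin n)) :
    ‖u y‖ₑ ≤ {y | t < 2 * a * ‖u y‖ₑ}.indicator (‖u ·‖ₑ) y + t / 2 * a⁻¹ * A.indicator 1 y := by
  by_cases hlarge : t < 2 * a * ‖u y‖ₑ
  · rw [indicator_of_mem (show y ∈ {y | t < 2 * a * ‖u y‖ₑ} from hlarge)]
    exact le_self_add
  by_cases hy : y ∈ A
  · rw [indicator_of_notMem (show y ∉ {y | t < 2 * a * ‖u y‖ₑ} from hlarge),
      indicator_of_mem hy, zero_add, Pi.one_apply, mul_one]
    calc ‖u y‖ₑ = a⁻¹ * (a * ‖u y‖ₑ) := by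
          rw [← mul_assoc, ENNReal.inv_mul_cancel ha0 ha, one_mul]
      _ ≤ a⁻¹ * (t / 2) := by
          gcongr
          rw [ENNReal.le_div_iff_mul_le (by simp) (by simp), mul_comm, ← mul_assoc]
          exact not_lt.1 hlarge
      _ = t / 2 * a⁻¹ := mul_comm _ _
  · simp [huA y hy]

lemma half_mul_volume_cube_le (hA : MeasurableSet A) (huA : ∀ y ∉ A, u y = 0) (ha0 : a ≠ 0)
    (ha : a ≠ ⊤) (ht : t ≠ ⊤)
    (hdens : volume (A ∩ cube c r) ≤ a * volume (cube c r))
    (hlt : t * volume (cube c r) < ∫⁻ y in cube c r, ‖u y‖ₑ) :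
    t / 2 * volume (cube c r) ≤
      ∫⁻ y in cube c r, {y | t < 2 * a * ‖u y‖ₑ}.indicator (‖u ·‖ₑ) y := by
  set I := ∫⁻ y in cube c r, {y | t < 2 * a * ‖u y‖ₑ}.indicator (‖u ·‖ₑ) y
  -- Where `2 a ‖u‖ₑ ≤ t`, `u` lives on `A`, whose density in the cube is at most `a`: this part
  -- of `‖u‖ₑ` contributes at most `t / 2` per unit volume.
  have hsplit : ∫⁻ y in cube c r, ‖u y‖ₑ ≤ I + t / 2 * volume (cube c r) :=
    calc ∫⁻ y in cube c r, ‖u y‖ₑ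
        ≤ ∫⁻ y in cube c r, ({y | t < 2 * a * ‖u y‖ₑ}.indicator (‖u ·‖ₑ) y +
            t / 2 * a⁻¹ * A.indicator 1 y) :=
          lintegral_mono (enorm_le_indicator_lt_add huA ha0 ha)
      _ = I + t / 2 * a⁻¹ * volume (A ∩ cube c r) := by
          rw [lintegral_add_right _ ((measurable_one.indicator hA).const_mul _),
            lintegral_const_mul _ (measurable_one.indicator hA), lintegral_indicator_one hA,
            Measure.restrict_apply hA]
      _ ≤ I + t / 2 * a⁻¹ * (a * volume (cube c r)) := by gcongr
      _ = I + t / 2 * volume (cube c r) := by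
          rw [mul_assoc, ← mul_assoc a⁻¹, ENNReal.inv_mul_cancel ha0 ha, one_mul]
  rw [← ENNReal.add_halves t, add_mul] at hlt
  have hfin : t / 2 * volume (cube c r) ≠ ⊤ :=
    ENNReal.mul_ne_top (ENNReal.div_ne_top ht two_ne_zero) (volume_cube_ne_top c r)
  exact ((ENNReal.add_lt_add_iff_right hfin).1 (hlt.trans_le hsplit)).le

lemma half_mul_volume_lt_hlMax_inter_le (hn : n ≠ 0) (hu2 : ∫⁻ y, ‖u y‖ₑ ^ 2 ≠ ⊤)
    (hA : MeasurableSet A) (huA : ∀ y ∉ A, u y = 0) (ha0 : a ≠ 0) (ha : a ≠ ⊤)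
    (hdens : ∀ x ∈ S, ∀ c r, 0 < r → x ∈ cube c r →
      volume (A ∩ cube c r) ≤ a * volume (cube c r))
    (hspread : ∀ c r, 0 < r → 0 < ∫⁻ y in cube c r, ‖u y‖ₑ →
      volume (S ∩ cube c (5 * r)) ≤ κ * volume (cube c (5 * r)))
    (ht0 : t ≠ 0) (ht : t ≠ ⊤) :
    t / 2 * volume ({x | t < hlMax n u x} ∩ S) ≤
      κ * 5 ^ n * ∫⁻ y, {y | t < 2 * a * ‖u y‖ₑ}.indicator (‖u ·‖ₑ) y := by
  refine mul_volume_inter_le_of_forall_cube (E := {x | t < hlMax n u x}) hn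
    (lintegral_indicator_lt_ne_top hu2 ht0 (ENNReal.mul_ne_top ENNReal.ofNat_ne_top ha))
    (ENNReal.half_pos ht0).ne' fun x hx => ?_
  obtain ⟨c, r, hr, hxc, hlt⟩ := exists_cube_of_lt_hlMax hx.1
  rw [← ENNReal.div_eq_inv_mul, ENNReal.lt_div_iff_mul_lt (Or.inl (volume_cube_pos c hr).ne')
    (Or.inl (volume_cube_ne_top c r))] at hlt
  exact ⟨c, r, hr, hxc, half_mul_volume_cube_le hA huA ha0 ha ht (hdens x hx.2 c r hr hxc) hlt,
    hspread c r hr (zero_le.trans_lt hlt)⟩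

theorem lintegral_hlMax_sq_le (hn : n ≠ 0) (hu : Measurable u) (hu2 : eLpNorm u 2 volume ≠ ⊤)
    (hA : MeasurableSet A) (huA : ∀ y ∉ A, u y = 0) (ha0 : a ≠ 0)
    (ha : a ≠ ⊤)
    (hdens : ∀ x ∈ S, ∀ c r, 0 < r → x ∈ cube c r →
      volume (A ∩ cube c r) ≤ a * volume (cube c r))
    (hspread : ∀ c r, 0 < r → 0 < ∫⁻ y in cube c r, ‖u y‖ₑ →
      volume (S ∩ cube c (5 * r)) ≤ κ * volume (cube c (5 * r))) :
    ∫⁻ x in S, hlMax n u x ^ 2 ≤ 8 * a * κ * 5 ^ n * eLpNorm u 2 volume ^ 2 := by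
  have hu2' : ∫⁻ y, ‖u y‖ₑ ^ 2 ≠ ⊤ := by
    rw [← eLpNorm_two_sq]; exact ENNReal.pow_ne_top hu2
  have hMu := measurable_hlMax u
  rw [eLpNorm_two_sq, lintegral_sq_eq_lintegral_meas_lt _ hMu]
  calc ∫⁻ l in Ioi 0, 2 * ENNReal.ofReal l * volume.restrict S {x | ENNReal.ofReal l < hlMax n u x}
      ≤ ∫⁻ l in Ioi 0, 4 * (κ * 5 ^ n) *
          ∫⁻ y, {y | ENNReal.ofReal l < 2 * a * ‖u y‖ₑ}.indicator (‖u ·‖ₑ) y := by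
        refine setLIntegral_mono' measurableSet_Ioi fun l hl => ?_
        have hl0 : ENNReal.ofReal l ≠ 0 := (ENNReal.ofReal_pos.2 hl).ne'
        rw [Measure.restrict_apply (measurableSet_lt measurable_const hMu)]
        calc 2 * ENNReal.ofReal l * volume ({x | ENNReal.ofReal l < hlMax n u x} ∩ S)
            = 4 * (ENNReal.ofReal l / 2 * volume ({x | ENNReal.ofReal l < hlMax n u x} ∩ S)) := by
              rw [← mul_assoc, show (4 : ℝ≥0∞) = 2 * 2 by norm_num, mul_assoc 2 2,
                ENNReal.mul_div_cancel two_ne_zero ENNReal.ofNat_ne_top]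
          _ ≤ 4 * (κ * 5 ^ n *
                ∫⁻ y, {y | ENNReal.ofReal l < 2 * a * ‖u y‖ₑ}.indicator (‖u ·‖ₑ) y) :=
              mul_le_mul_right (half_mul_volume_lt_hlMax_inter_le hn hu2' hA huA ha0 ha hdens
                hspread hl0 ENNReal.ofReal_ne_top) 4
          _ = _ := (mul_assoc _ _ _).symm
    _ = 4 * (κ * 5 ^ n) * (2 * a * ∫⁻ y, ‖u y‖ₑ ^ 2) := by
        rw [lintegral_const_mul _ (measurable_indicator_ofReal_lt hu.enorm _).lintegral_prod_right',
          lintegral_Ioi_lintegral_indicator_lt volume hu.enorm]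
    _ = 8 * a * κ * 5 ^ n * ∫⁻ y, ‖u y‖ₑ ^ 2 := by ring

end StrongType

lemma volume_inter_cube_le_of_lintegral_indicator_pos {G : Set (EuclideanSpace ℝ (Fin n))}
    (hG : MeasurableSet G) {ν : ℝ≥0∞} {g : EuclideanSpace ℝ (Fin n) → ℂ} (hr : 0 < r)
    (h : 0 < ∫⁻ y in cube c r,
      ‖{x | ν < hlMax n (G.indicator fun _ => (1 : ℂ)) x}ᶜ.indicator g y‖ₑ) :
    volume (G ∩ cube c (5 * r)) ≤ ν * volume (cube c (5 * r)) := by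
  obtain ⟨y, hyc, hy⟩ : ∃ y ∈ cube c r, hlMax n (G.indicator fun _ => (1 : ℂ)) y ≤ ν := by
    by_contra! hlarge
    have hzero : ∀ y ∈ cube c r,
        ‖{x | ν < hlMax n (G.indicator fun _ => (1 : ℂ)) x}ᶜ.indicator g y‖ₑ = 0 :=
      fun y hy => by simp [not_le.2 (hlarge y hy)]
    exact h.ne' ((setLIntegral_congr_fun (measurableSet_cube c r) hzero).trans lintegral_zero)
  exact volume_inter_cube_le_of_hlMax_indicator_le hG (by positivity)
    (cube_mono c (by linarith) hyc) hy

theorem lintegral_hlMax_indicator_compl_sq_le (hn : n ≠ 0) {G : Set (EuclideanSpace ℝ (Fin n))}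
    (hG : MeasurableSet G) (ν : ℝ≥0∞) {g : EuclideanSpace ℝ (Fin n) → ℂ} (hg : Measurable g)
    (hg2 : eLpNorm g 2 volume ≠ ⊤) :
    ∫⁻ x in G, hlMax n ({x | ν < hlMax n (G.indicator fun _ => (1 : ℂ)) x}ᶜ.indicator g) x ^ 2 ≤
      8 * 5 ^ n * ν * eLpNorm g 2 volume ^ 2 := by
  set Gν := {x | ν < hlMax n (G.indicator fun _ => (1 : ℂ)) x}
  have hGν : MeasurableSet Gν := measurableSet_lt measurable_const (measurable_hlMax _)
  calc _ ≤ 8 * 1 * ν * 5 ^ n * eLpNorm (Gνᶜ.indicator g) 2 volume ^ 2 :=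
        lintegral_hlMax_sq_le hn (hg.indicator hGν.compl)
          (ne_top_of_le_ne_top hg2 (eLpNorm_indicator_le _)) MeasurableSet.univ
          (fun y hy => absurd (mem_univ y) hy) one_ne_zero ENNReal.one_ne_top
          (fun _ _ c r _ _ => by rw [univ_inter, one_mul])
          (fun c r hr h => volume_inter_cube_le_of_lintegral_indicator_pos hG hr h)
    _ ≤ 8 * 5 ^ n * ν * eLpNorm g 2 volume ^ 2 := by
        rw [mul_one, mul_right_comm 8]
        gcongr
        exact eLpNorm_indicator_le _

theorem lintegral_compl_hlMax_indicator_sq_le (hn : n ≠ 0) {G : Set (EuclideanSpace ℝ (Fin n))}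
    (hG : MeasurableSet G) {ν : ℝ≥0∞} (hν0 : ν ≠ 0) (hν : ν ≠ ⊤)
    {g : EuclideanSpace ℝ (Fin n) → ℂ} (hg : Measurable g) (hg2 : eLpNorm g 2 volume ≠ ⊤) :
    ∫⁻ x in {x | ν < hlMax n (G.indicator fun _ => (1 : ℂ)) x}ᶜ, hlMax n (G.indicator g) x ^ 2 ≤
      8 * 5 ^ n * ν * eLpNorm g 2 volume ^ 2 := by
  calc _ ≤ 8 * ν * 1 * 5 ^ n * eLpNorm (G.indicator g) 2 volume ^ 2 :=
        lintegral_hlMax_sq_le hn (hg.indicator hG)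
          (ne_top_of_le_ne_top hg2 (eLpNorm_indicator_le _)) hG
          (fun y hy => indicator_of_notMem hy _) hν0 hν
          (fun x hx c r hr hxc =>
            volume_inter_cube_le_of_hlMax_indicator_le hG hr hxc (not_lt.1 hx))
          (fun c r _ _ => by rw [one_mul]; exact measure_mono inter_subset_right)
    _ ≤ 8 * 5 ^ n * ν * eLpNorm g 2 volume ^ 2 := by
        rw [mul_one, mul_right_comm 8]
        gcongr
        exact eLpNorm_indicator_le _

lemma rpow_half_le_of_le_ofReal_mul_sq {A B : ℝ≥0∞} {K ν α : ℝ} (hK : 0 ≤ K) (hν0 : 0 < ν)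
    (hν1 : ν ≤ 1) (hα : α ≤ 1 / 2) (h : A ≤ ENNReal.ofReal K * ENNReal.ofReal ν * B ^ 2) :
    A ^ (1 / 2 : ℝ) ≤ ENNReal.ofReal (√K * ν ^ α) * B := by
  have hKν : ENNReal.ofReal K * ENNReal.ofReal ν = ENNReal.ofReal (√(K * ν)) ^ 2 := by
    rw [← ENNReal.ofReal_pow (Real.sqrt_nonneg _), Real.sq_sqrt (by positivity),
      ENNReal.ofReal_mul hK]
  have hsqrt : √(K * ν) ≤ √K * ν ^ α := by
    rw [Real.sqrt_mul hK, Real.sqrt_eq_rpow ν]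
    exact mul_le_mul_of_nonneg_left (Real.rpow_le_rpow_of_exponent_ge hν0 hν1 hα)
      (Real.sqrt_nonneg K)
  calc A ^ (1 / 2 : ℝ) ≤ ((ENNReal.ofReal √(K * ν) * B) ^ 2) ^ (1 / 2 : ℝ) := by
        rw [mul_pow, ← hKν]; gcongr
    _ = ENNReal.ofReal √(K * ν) * B := by
        rw [← ENNReal.rpow_natCast, ← ENNReal.rpow_mul]; norm_num
    _ ≤ ENNReal.ofReal (√K * ν ^ α) * B := by gcongr

end CubeMaximal

open CubeMaximal

theorem statement7_general (n : ℕ) (hn : 1 ≤ n) (α : ℝ) (hα : α < 1 / 2) :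
    ∃ C : ℝ, 0 < C ∧
      ∀ ν : ℝ, 0 < ν → ν ≤ 1 →
      ∀ G : Set (EuclideanSpace ℝ (Fin n)), MeasurableSet G →
      ∀ f : EuclideanSpace ℝ (Fin n) → ℂ, MemLp f 2 volume →
        -- ‖1_G · M(1_{ℝ^n∖G̃} f)‖₂ ≤ C ν^α ‖f‖₂
        ((∫⁻ x in G, hlMax n
              (({x | ENNReal.ofReal ν <
                  hlMax n (G.indicator fun _ => (1 : ℂ)) x})ᶜ.indicator f) x ^ (2 : ℝ))
            ^ ((1 : ℝ) / 2)
          ≤ ENNReal.ofReal (C * ν ^ α) * eLpNorm f 2 volume) ∧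
        -- ‖1_{ℝ^n∖G̃} · M(1_G f)‖₂ ≤ C ν^α ‖f‖₂
        ((∫⁻ x in ({x | ENNReal.ofReal ν <
              hlMax n (G.indicator fun _ => (1 : ℂ)) x})ᶜ,
            hlMax n (G.indicator f) x ^ (2 : ℝ)) ^ ((1 : ℝ) / 2)
          ≤ ENNReal.ofReal (C * ν ^ α) * eLpNorm f 2 volume) := by
  refine ⟨√(8 * 5 ^ n), by positivity, fun ν hν0 hν1 G hG f hf => ?_⟩
  obtain ⟨g, hg, hfg⟩ : ∃ g, Measurable g ∧ f =ᵐ[volume] g :=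
    ⟨_, hf.1.aemeasurable.measurable_mk, hf.1.aemeasurable.ae_eq_mk⟩
  have hg2 : eLpNorm g 2 volume ≠ ⊤ := eLpNorm_congr_ae hfg ▸ hf.2.ne
  have h85 : ENNReal.ofReal (8 * 5 ^ n) = 8 * 5 ^ n := by
    rw [ENNReal.ofReal_mul (by norm_num), ENNReal.ofReal_pow (by norm_num)]; norm_num
  have hsqrt {S T : Set (EuclideanSpace ℝ (Fin n))}
      (h : ∫⁻ x in S, hlMax n (T.indicator g) x ^ 2 ≤
        8 * 5 ^ n * ENNReal.ofReal ν * eLpNorm g 2 volume ^ 2) :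
      (∫⁻ x in S, hlMax n (T.indicator f) x ^ (2 : ℝ)) ^ ((1 : ℝ) / 2) ≤
        ENNReal.ofReal (√(8 * 5 ^ n) * ν ^ α) * eLpNorm f 2 volume := by
    rw [hlMax_congr_ae (g := T.indicator g) (hfg.mono fun y hy => by simp only [indicator, hy]),
      eLpNorm_congr_ae hfg]
    simp only [ENNReal.rpow_two]
    exact rpow_half_le_of_le_ofReal_mul_sq (by positivity) hν0 hν1 hα.le (h85 ▸ h)
  exact ⟨hsqrt (lintegral_hlMax_indicator_compl_sq_le (by omega) hG _ hg hg2),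
    hsqrt (lintegral_compl_hlMax_indicator_sq_le (by omega) hG (by simpa using hν0)
      ENNReal.ofReal_ne_top hg hg2)⟩

/-- localized `L²` estimates for the Hardy–Littlewood maximal operator. -/
theorem statement7 (n : ℕ) (hn : 1 ≤ n) (α : ℝ) (hα0 : 0 ≤ α) (hα : α < 1 / 2) :
    ∃ C : ℝ, 0 < C ∧
      ∀ ν : ℝ, 0 < ν → ν ≤ 1 →
      ∀ G : Set (EuclideanSpace ℝ (Fin n)), MeasurableSet G →
      ∀ f : EuclideanSpace ℝ (Fin n) → ℂ, MemLp f 2 volume →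
        -- ‖1_G · M(1_{ℝ^n∖G̃} f)‖₂ ≤ C ν^α ‖f‖₂
        ((∫⁻ x in G, hlMax n
              (({x | ENNReal.ofReal ν <
                  hlMax n (G.indicator fun _ => (1 : ℂ)) x})ᶜ.indicator f) x ^ (2 : ℝ))
            ^ ((1 : ℝ) / 2)
          ≤ ENNReal.ofReal (C * ν ^ α) * eLpNorm f 2 volume) ∧
        -- ‖1_{ℝ^n∖G̃} · M(1_G f)‖₂ ≤ C ν^α ‖f‖₂
        ((∫⁻ x in ({x | ENNReal.ofReal ν <
              hlMax n (G.indicator fun _ => (1 : ℂ)) x})ᶜ,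
            hlMax n (G.indicator f) x ^ (2 : ℝ)) ^ ((1 : ℝ) / 2)
          ≤ ENNReal.ofReal (C * ν ^ α) * eLpNorm f 2 volume) :=
  statement7_general n hn α hα
end

section
/- For every δ > 0 and every function η : (0,∞) → (0,∞) there is a constant C_0 = C_0(δ,η) < ∞ such that: for every Hilbert space H, every extended seminorm ρ on H, and every f ∈ H with ‖f‖_H ≤ 1, there exist a real number C with 1 ≤ C ≤ C_0 and elements σ, u, v ∈ H with f = σ + u + v, ρ(σ) < C, ρ*(u) < η(C), and ‖v‖_H < δ. -/
/-!
Let `K_k = {ρ ≤ C_k}` for a fast-growing sequence of scales `C_k` and let `p_k` be the projection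
of `f` onto the closed convex set `closure K_k`. As the `K_k` increase, `‖f - p_k‖²` drops by at
least `‖p_{k+1} - p_k‖²` at each step, starting from at most `‖f‖² ≤ 1`, so some step `k < N` moves
by at most `1/N`. Take `σ ∈ K_k` near `p_k`, `u = f - p_{k+1}` and `v = p_{k+1} - σ`. Testing the
variational inequality of `p_{k+1}` at `C_{k+1} φ ∈ K_{k+1}` gives `|⟨u, φ⟩| ≤ 1 / (4 C_{k+1})`
whenever `ρ φ ≤ 1`, and `C_{k+1}` is chosen large enough for this to be below `η (C_k + 1)`.
-/

open scoped ENNReal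

/-- The dual of an extended seminorm `ρ` on a Hilbert space:
`ρ*(f) = sup { |⟨f,φ⟩| : ρ(φ) ≤ 1 }`. -/
noncomputable def dualSeminorm (𝕜 : Type*) {H : Type*} [RCLike 𝕜] [NormedAddCommGroup H]
    [InnerProductSpace 𝕜 H] (ρ : H → ℝ≥0∞) (f : H) : ℝ≥0∞ :=
  ⨆ (φ : H) (_ : ρ φ ≤ 1), ENNReal.ofReal ‖(inner 𝕜 f φ : 𝕜)‖

open scoped RealInnerProductSpace

lemma exists_lt_le_div_of_add_le {d e : ℕ → ℝ} (hd : ∀ k, 0 ≤ d k)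
    (hstep : ∀ k, d (k + 1) + e k ≤ d k) {N : ℕ} (hN : 0 < N) :
    ∃ k < N, e k ≤ d 0 / N := by
  have htel : ∑ k ∈ Finset.range N, e k ≤ ∑ _k ∈ Finset.range N, d 0 / N := by
    calc ∑ k ∈ Finset.range N, e k ≤ ∑ k ∈ Finset.range N, (d k - d (k + 1)) :=
          Finset.sum_le_sum fun k _ => by linarith [hstep k]
      _ = d 0 - d N := Finset.sum_range_sub' d N
      _ ≤ d 0 := by linarith [hd N]
      _ = ∑ _k ∈ Finset.range N, d 0 / N := by
          rw [Finset.sum_const, Finset.card_range, nsmul_eq_mul]; field_simp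
  obtain ⟨k, hk, hle⟩ := Finset.exists_le_of_sum_le (Finset.nonempty_range_iff.2 hN.ne') htel
  exact ⟨k, Finset.mem_range.1 hk, hle⟩

lemma convex_setOf_le {E : Type*} [AddCommGroup E] [Module ℝ E] {ρ : E → ℝ≥0∞}
    (hsmul : ∀ c : ℝ, 0 < c → ∀ x, ρ (c • x) ≤ ENNReal.ofReal c * ρ x)
    (hadd : ∀ x y, ρ (x + y) ≤ ρ x + ρ y) (r : ℝ≥0∞) : Convex ℝ {x | ρ x ≤ r} := by
  refine convex_iff_openSegment_subset.2 fun x hx y hy z ⟨a, b, ha, hb, hab, hz⟩ => ?_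
  rw [← hz]
  calc ρ (a • x + b • y) ≤ ENNReal.ofReal a * ρ x + ENNReal.ofReal b * ρ y :=
        (hadd _ _).trans (add_le_add (hsmul a ha x) (hsmul b hb y))
    _ ≤ ENNReal.ofReal a * r + ENNReal.ofReal b * r := by gcongr <;> assumption
    _ = r := by
        rw [← add_mul, ← ENNReal.ofReal_add ha.le hb.le, hab, ENNReal.ofReal_one, one_mul]

lemma dualSeminorm_le_ofReal {𝕜 H : Type*} [RCLike 𝕜] [NormedAddCommGroup H]
    [InnerProductSpace 𝕜 H] {ρ : H → ℝ≥0∞}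
    (hsmul : ∀ (c : 𝕜) (x : H), c ≠ 0 → ρ (c • x) = ENNReal.ofReal ‖c‖ * ρ x) {u : H} {B : ℝ}
    (hB : ∀ φ, ρ φ ≤ 1 → RCLike.re (inner 𝕜 u φ) ≤ B) : dualSeminorm 𝕜 ρ u ≤ ENNReal.ofReal B := by
  refine iSup₂_le fun φ hφ => ENNReal.ofReal_le_ofReal ?_
  set a : 𝕜 := inner 𝕜 u φ with ha
  rcases eq_or_ne a 0 with ha0 | ha0
  · simpa [← ha, ha0] using hB φ hφ
  set c : 𝕜 := (‖a‖ : 𝕜) / a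
  have hc : ‖c‖ = 1 := by
    rw [norm_div, RCLike.norm_ofReal, abs_norm, div_self (norm_ne_zero_iff.2 ha0)]
  have hcφ : ρ (c • φ) ≤ 1 := by
    rwa [hsmul c φ (norm_ne_zero_iff.1 (hc.symm ▸ one_ne_zero)), hc, ENNReal.ofReal_one, one_mul]
  have hre : RCLike.re (inner 𝕜 u (c • φ)) = ‖a‖ := by
    rw [inner_smul_right, ← ha, div_mul_cancel₀ _ ha0, RCLike.ofReal_re]
  exact hre ▸ hB _ hcφ

section RealInnerProductSpace

variable {E : Type*} [NormedAddCommGroup E] [InnerProductSpace ℝ E]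

lemma real_inner_le_norm_add_sq_div_four (x y : E) : ⟪x, y⟫ ≤ ‖x + y‖ ^ 2 / 4 := by
  nlinarith [norm_add_sq_real x y, norm_sub_sq_real x y, sq_nonneg ‖x - y‖]

lemma norm_sub_sq_add_norm_sub_sq_le {f p w : E} (h : ⟪f - p, w - p⟫ ≤ 0) :
    ‖f - p‖ ^ 2 + ‖p - w‖ ^ 2 ≤ ‖f - w‖ ^ 2 := by
  have hsplit : f - w = (f - p) + (p - w) := by abel
  have hflip : ⟪f - p, p - w⟫ = -⟪f - p, w - p⟫ := by rw [← inner_neg_right, neg_sub]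
  rw [hsplit, norm_add_sq_real, hflip]
  linarith

lemma mul_real_inner_le_of_forall_real_inner_sub_le_zero {K : Set E} {f q φ : E} {M : ℝ}
    (hq : ∀ w ∈ K, ⟪f - q, w - q⟫ ≤ 0) (hφ : M • φ ∈ K) :
    M * ⟪f - q, φ⟫ ≤ ‖f‖ ^ 2 / 4 := by
  have hvar := hq _ hφ
  rw [inner_sub_right, real_inner_smul_right] at hvar
  have hq_le := real_inner_le_norm_add_sq_div_four (f - q) q
  rw [sub_add_cancel] at hq_le
  linarith

lemma exists_mem_closure_forall_real_inner_sub_le_zero [CompleteSpace E] {K : Set E}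
    (hK : Convex ℝ K) (hne : K.Nonempty) (f : E) :
    ∃ p ∈ closure K, ∀ w ∈ closure K, ⟪f - p, w - p⟫ ≤ 0 := by
  obtain ⟨p, hp, hmin⟩ := exists_norm_eq_iInf_of_complete_convex hne.closure
    isClosed_closure.isComplete hK.closure f
  exact ⟨p, hp, (norm_eq_iInf_iff_real_inner_le_zero hK.closure hp).1 hmin⟩

lemma exists_near_consecutive_projections [CompleteSpace E] {K : ℕ → Set E}
    (hK : ∀ k, Convex ℝ (K k)) (hmono : Monotone K) (h0 : (0 : E) ∈ K 0) (f : E) {N : ℕ}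
    (hN : 0 < N) :
    ∃ k < N, ∃ p ∈ closure (K k), ∃ q : E,
      (∀ w ∈ K (k + 1), ⟪f - q, w - q⟫ ≤ 0) ∧ ‖q - p‖ ^ 2 ≤ ‖f‖ ^ 2 / N := by
  choose p hp hproj using fun k =>
    exists_mem_closure_forall_real_inner_sub_le_zero (hK k) ⟨0, hmono (Nat.zero_le k) h0⟩ f
  have hstep (k : ℕ) : ‖f - p (k + 1)‖ ^ 2 + ‖p (k + 1) - p k‖ ^ 2 ≤ ‖f - p k‖ ^ 2 :=
    norm_sub_sq_add_norm_sub_sq_le <|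
      hproj (k + 1) _ (closure_mono (hmono k.le_succ) (hp k))
  have hstart : ‖f - p 0‖ ^ 2 ≤ ‖f‖ ^ 2 := by
    have := norm_sub_sq_add_norm_sub_sq_le (hproj 0 0 (subset_closure h0))
    rw [sub_zero, sub_zero] at this
    linarith [sq_nonneg ‖p 0‖]
  obtain ⟨k, hk, hclose⟩ := exists_lt_le_div_of_add_le (fun k => sq_nonneg ‖f - p k‖) hstep hN
  exact ⟨k, hk, p k, hp k, p (k + 1), fun w hw => hproj (k + 1) w (subset_closure hw),
    hclose.trans (by gcongr)⟩

lemma exists_decomposition_of_scales [CompleteSpace E] {ρ : E → ℝ≥0∞} (hρ0 : ρ 0 = 0)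
    (hsmul : ∀ c : ℝ, 0 < c → ∀ x, ρ (c • x) ≤ ENNReal.ofReal c * ρ x)
    (hadd : ∀ x y, ρ (x + y) ≤ ρ x + ρ y) {C : ℕ → ℝ} (hCpos : ∀ k, 0 < C k) (hC : Monotone C)
    {N : ℕ} (hN : 0 < N) {ε : ℝ} (hε : 0 < ε) (hNε : 1 / N < ε ^ 2) {f : E} (hf : ‖f‖ ≤ 1) :
    ∃ k < N, ∃ σ u v : E, f = σ + u + v ∧ ρ σ ≤ ENNReal.ofReal (C k) ∧
      (∀ φ, ρ φ ≤ 1 → ⟪u, φ⟫ ≤ 1 / (4 * C (k + 1))) ∧ ‖v‖ < 2 * ε := by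
  set K : ℕ → Set E := fun k => {x | ρ x ≤ ENNReal.ofReal (C k)}
  have hKmono : Monotone K := fun j k hjk x hx => hx.trans (ENNReal.ofReal_le_ofReal (hC hjk))
  obtain ⟨k, hk, p, hp, q, hq, hpq⟩ := exists_near_consecutive_projections
    (fun k => convex_setOf_le hsmul hadd _) hKmono (by simp [hρ0]) f hN
  obtain ⟨σ, hσ, hpσ⟩ := Metric.mem_closure_iff.1 hp ε hε
  refine ⟨k, hk, σ, f - q, q - σ, by abel, hσ, fun φ hφ => ?_, ?_⟩
  · have hMφ : C (k + 1) • φ ∈ K (k + 1) :=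
      calc ρ (C (k + 1) • φ) ≤ ENNReal.ofReal (C (k + 1)) * ρ φ := hsmul _ (hCpos _) φ
        _ ≤ ENNReal.ofReal (C (k + 1)) := mul_le_of_le_one_right' hφ
    have hbound := mul_real_inner_le_of_forall_real_inner_sub_le_zero hq hMφ
    rw [le_div_iff₀ (by linarith [hCpos (k + 1)])]
    nlinarith [norm_nonneg f]
  · have hqp : ‖q - p‖ < ε := by
      refine lt_of_pow_lt_pow_left₀ 2 hε.le (hpq.trans_lt (lt_of_le_of_lt ?_ hNε))
      gcongr
      nlinarith [norm_nonneg f]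
    calc ‖q - σ‖ ≤ ‖q - p‖ + ‖p - σ‖ := norm_sub_le_norm_sub_add_norm_sub q p σ
      _ < 2 * ε := by linarith [dist_eq_norm p σ]

end RealInnerProductSpace

noncomputable def regularityScale (η : ℝ → ℝ) : ℕ → ℝ
  | 0 => 1
  | k + 1 => max (regularityScale η k) (1 / η (regularityScale η k + 1))

lemma one_le_regularityScale (η : ℝ → ℝ) : ∀ k, 1 ≤ regularityScale η k
  | 0 => le_rfl
  | k + 1 => (one_le_regularityScale η k).trans (le_max_left _ _)

lemma monotone_regularityScale (η : ℝ → ℝ) : Monotone (regularityScale η) :=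
  monotone_nat_of_le_succ fun _ => le_max_left _ _

lemma one_div_four_mul_regularityScale_succ_lt {η : ℝ → ℝ} {k : ℕ}
    (hη : 0 < η (regularityScale η k + 1)) :
    1 / (4 * regularityScale η (k + 1)) < η (regularityScale η k + 1) := by
  have hstep : 1 / η (regularityScale η k + 1) ≤ regularityScale η (k + 1) := le_max_right _ _
  rw [div_le_iff₀ hη] at hstep
  rw [div_lt_iff₀ (by linarith [one_le_regularityScale η (k + 1)])]
  nlinarith

/-- Gowers's Hilbert space regularity lemma for extended seminorms. -/
theorem statement8 (δ : ℝ) (hδ : 0 < δ) (η : ℝ → ℝ) (hη : ∀ x, 0 < x → 0 < η x) :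
    ∃ C₀ : ℝ, 0 < C₀ ∧
      ∀ (𝕜 : Type) (H : Type) [RCLike 𝕜] [NormedAddCommGroup H] [InnerProductSpace 𝕜 H]
        [CompleteSpace H],
      ∀ ρ : H → ℝ≥0∞,
        ρ 0 = 0 →
        (∀ (c : 𝕜) (f : H), c ≠ 0 → ρ (c • f) = ENNReal.ofReal ‖c‖ * ρ f) →
        (∀ f g : H, ρ (f + g) ≤ ρ f + ρ g) →
      ∀ f : H, ‖f‖ ≤ 1 →
        ∃ C : ℝ, 1 ≤ C ∧ C ≤ C₀ ∧
          ∃ σ u v : H, f = σ + u + v ∧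
            ρ σ < ENNReal.ofReal C ∧
            dualSeminorm 𝕜 ρ u < ENNReal.ofReal (η C) ∧
            ‖v‖ < δ := by
  obtain ⟨n, hn⟩ := exists_nat_one_div_lt (show (0 : ℝ) < (δ / 2) ^ 2 by positivity)
  have hscale := one_le_regularityScale η
  refine ⟨regularityScale η (n + 1) + 1, by linarith [hscale (n + 1)], ?_⟩
  intro 𝕜 H _ _ _ _ ρ hρ0 hρsmul hρadd f hf
  -- the real structure has `⟪x, y⟫_ℝ = re ⟪x, y⟫_𝕜` definitionally, which is how `hu` feeds
  -- `dualSeminorm_le_ofReal` below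
  let := InnerProductSpace.rclikeToReal 𝕜 H
  have hρsmulℝ (c : ℝ) (hc : 0 < c) (x : H) : ρ (c • x) ≤ ENNReal.ofReal c * ρ x := by
    rw [RCLike.real_smul_eq_coe_smul (K := 𝕜), hρsmul _ _ (RCLike.ofReal_ne_zero.2 hc.ne'),
      RCLike.norm_ofReal, abs_of_pos hc]
  obtain ⟨k, hk, σ, u, v, rfl, hσ, hu, hv⟩ := exists_decomposition_of_scales hρ0 hρsmulℝ hρadd
    (fun k => one_pos.trans_le (hscale k)) (monotone_regularityScale η) n.succ_pos
    (half_pos hδ) (by exact_mod_cast hn) hf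
  have hC : 0 < regularityScale η k + 1 := by linarith [hscale k]
  refine ⟨regularityScale η k + 1, by linarith [hscale k],
    by linarith [monotone_regularityScale η hk.le], σ, u, v, rfl, ?_, ?_, by linarith⟩
  · exact hσ.trans_lt ((ENNReal.ofReal_lt_ofReal_iff hC).2 (lt_add_one _))
  · exact (dualSeminorm_le_ofReal hρsmul hu).trans_lt ((ENNReal.ofReal_lt_ofReal_iff (hη _ hC)).2
      (one_div_four_mul_regularityScale_succ_lt (hη _ hC)))
end

section
/- Let d ≥ 1 and let ω be a Dini modulus of continuity. There is a constant C depending only on d and ω such that for all 0 < t ≤ t', all y, y' ∈ ℝ^d, and all φ, φ' ∈ 𝒞(ω,d): |∫_{ℝ^d} φ_{y,t}(z) · conj(φ'_{y',t'}(z)) dz| ≤ C t'^{−d} ω(t/t'). -/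
/-!
Since `∫ φ_{y,t} = ∫ φ = 0`, one may subtract from `conj φ'_{y',t'}` its value at `y` before
integrating. On the support `B(y, t)` of `φ_{y,t}` this difference is at most
`t'^{-d} ω(|z - y| / t') ≤ 3 t'^{-d} ω(t / t')` (subadditivity with `|z - y| ≤ t`), while
`∫ |φ_{y,t}| = ∫ |φ| ≤ ω(3) |B(0,1)|`, because a function supported in `B(0,1)` vanishes at
distance `3` from any point of the ball.
-/

open MeasureTheory Metric Module ComplexConjugate

def IsSubadditiveModulus (ω : ℝ → ℝ) : Prop :=
  ∀ u s t : ℝ, 0 ≤ u → 0 ≤ s → 0 ≤ t → u ≤ s + t → ω u ≤ ω s + ω t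

theorem IsSubadditiveModulus.le_three_mul {ω : ℝ → ℝ} (hω : IsSubadditiveModulus ω) {u s : ℝ}
    (hu : 0 ≤ u) (hus : u ≤ s) : ω u ≤ 3 * ω s := by
  have hs := hu.trans hus
  have h₁ := hω u s 0 hu hs le_rfl (by linarith)
  have h₀ := hω 0 s s le_rfl hs hs (by linarith)
  linarith

section UnitBall

variable {E F : Type*} [NormedAddCommGroup E] [NormedAddCommGroup F] {ψ : E → F}

theorem eq_zero_of_notMem_closedBall (hs : ∀ z, ψ z ≠ 0 → ‖z‖ ≤ 1) :
    ∀ z ∉ closedBall (0 : E) 1, ψ z = 0 := fun z hz => by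
  by_contra h
  exact hz (mem_closedBall_zero_iff.2 (hs z h))

theorem norm_le_of_modulus [NormedSpace ℝ E] [Nontrivial E] {ω : ℝ → ℝ}
    (hs : ∀ z, ψ z ≠ 0 → ‖z‖ ≤ 1) (hψ : ∀ z z', ‖ψ z - ψ z'‖ ≤ ω ‖z - z'‖) (z : E) :
    ‖ψ z‖ ≤ ω 3 := by
  obtain ⟨u, hu⟩ := exists_norm_eq E (by norm_num : (0 : ℝ) ≤ 3)
  have hvanish : ψ z = 0 ∨ ψ (z + u) = 0 := by
    by_contra! h
    have := norm_sub_le (z + u) z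
    rw [add_sub_cancel_left, hu] at this
    linarith [hs _ h.1, hs _ h.2]
  calc ‖ψ z‖ ≤ ‖ψ z - ψ (z + u)‖ := by rcases hvanish with h | h <;> simp [h]
    _ ≤ ω ‖z - (z + u)‖ := hψ _ _
    _ = ω 3 := by rw [sub_add_cancel_left, norm_neg, hu]

variable [MeasurableSpace E] [ProperSpace E] {μ : Measure E}
  [IsFiniteMeasureOnCompacts μ] {M : ℝ}

theorem integrable_of_norm_le_of_support_unitBall (hm : AEStronglyMeasurable ψ μ)
    (hs : ∀ z, ψ z ≠ 0 → ‖z‖ ≤ 1) (hb : ∀ z, ‖ψ z‖ ≤ M) : Integrable ψ μ :=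
  (Measure.integrableOn_of_bounded measure_closedBall_lt_top.ne hm
    (ae_of_all _ hb)).integrable_of_forall_notMem_eq_zero (eq_zero_of_notMem_closedBall hs)

theorem integral_norm_le_of_support_unitBall (hs : ∀ z, ψ z ≠ 0 → ‖z‖ ≤ 1)
    (hb : ∀ z, ‖ψ z‖ ≤ M) : ∫ z, ‖ψ z‖ ∂μ ≤ M * μ.real (closedBall 0 1) := by
  rw [← setIntegral_eq_integral_of_forall_compl_eq_zero (s := closedBall 0 1)
    (fun z hz => by rw [eq_zero_of_notMem_closedBall hs z hz, norm_zero])]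
  refine (le_abs_self _).trans ?_
  rw [← Real.norm_eq_abs]
  exact norm_setIntegral_le_of_norm_le_const (f := fun z => ‖ψ z‖) measure_closedBall_lt_top
    fun z _ => by simpa using hb z

end UnitBall

theorem norm_integral_mul_le_of_integral_eq_zero {α 𝕜 : Type*} [MeasurableSpace α]
    [RCLike 𝕜] {μ : Measure α} {f h : α → 𝕜} (c : 𝕜) {M : ℝ} (hf : Integrable f μ)
    (hf0 : ∫ z, f z ∂μ = 0) (hfh : Integrable (fun z => f z * h z) μ)
    (hosc : ∀ z, f z ≠ 0 → ‖h z - c‖ ≤ M) :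
    ‖∫ z, f z * h z ∂μ‖ ≤ (∫ z, ‖f z‖ ∂μ) * M := by
  have hsub_const : ∫ z, f z * h z ∂μ = ∫ z, f z * (h z - c) ∂μ := by
    simp_rw [mul_sub]
    rw [integral_sub hfh (hf.mul_const c), integral_mul_const, hf0, zero_mul, sub_zero]
  have hpt : ∀ z, ‖f z * (h z - c)‖ ≤ ‖f z‖ * M := fun z => by
    by_cases hz : f z = 0
    · simp [hz]
    · rw [norm_mul]
      exact mul_le_mul_of_nonneg_left (hosc z hz) (norm_nonneg _)
  calc ‖∫ z, f z * h z ∂μ‖ ≤ ∫ z, ‖f z * (h z - c)‖ ∂μ :=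
        hsub_const ▸ norm_integral_le_integral_norm _
    _ ≤ ∫ z, ‖f z‖ * M ∂μ :=
        integral_mono_of_nonneg (ae_of_all _ fun _ => norm_nonneg _) (hf.norm.mul_const M)
          (ae_of_all _ hpt)
    _ = (∫ z, ‖f z‖ ∂μ) * M := integral_mul_const _ _

section Packet

variable {E : Type*} [NormedAddCommGroup E] [NormedSpace ℝ E]

noncomputable def packet (φ : E → ℂ) (y : E) (t : ℝ) (z : E) : ℂ :=
  ((t ^ finrank ℝ E : ℝ)⁻¹ : ℂ) * φ (t⁻¹ • (y - z))

variable {φ : E → ℂ} {y : E} {t : ℝ}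

theorem norm_packet (ht : 0 < t) (z : E) :
    ‖packet φ y t z‖ = (t ^ finrank ℝ E)⁻¹ * ‖φ (t⁻¹ • (y - z))‖ := by
  rw [packet, norm_mul, norm_inv, Complex.norm_real, Real.norm_of_nonneg (by positivity)]

theorem norm_packet_le {B : ℝ} (ht : 0 < t) (hb : ∀ z, ‖φ z‖ ≤ B) (z : E) :
    ‖packet φ y t z‖ ≤ (t ^ finrank ℝ E)⁻¹ * B := by
  rw [norm_packet ht]
  gcongr
  exact hb _

theorem norm_sub_le_of_packet_ne_zero (hs : ∀ z, φ z ≠ 0 → ‖z‖ ≤ 1) (ht : 0 < t) {z : E}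
    (hz : packet φ y t z ≠ 0) : ‖y - z‖ ≤ t := by
  have h := hs _ (right_ne_zero_of_mul hz)
  rwa [norm_smul, norm_inv, Real.norm_of_nonneg ht.le, inv_mul_le_iff₀ ht, mul_one] at h

theorem norm_packet_sub_packet_le {ω : ℝ → ℝ} (ht : 0 < t)
    (hφ : ∀ z z', ‖φ z - φ z'‖ ≤ ω ‖z - z'‖) (z z' : E) :
    ‖packet φ y t z - packet φ y t z'‖ ≤ (t ^ finrank ℝ E)⁻¹ * ω (‖z - z'‖ / t) := by
  have hdiff : t⁻¹ • (y - z) - t⁻¹ • (y - z') = t⁻¹ • (z' - z) := by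
    rw [← smul_sub, sub_sub_sub_cancel_left]
  rw [packet, packet, ← mul_sub, norm_mul, norm_inv, Complex.norm_real,
    Real.norm_of_nonneg (by positivity)]
  gcongr
  refine (hφ _ _).trans_eq ?_
  rw [hdiff, norm_smul, norm_inv, Real.norm_of_nonneg ht.le, norm_sub_rev, inv_mul_eq_div]

theorem measurable_packet [MeasurableSpace E] [BorelSpace E] (hφ : Measurable φ) :
    Measurable (packet φ y t) :=
  measurable_const.mul (hφ.comp ((continuous_const.sub continuous_id).const_smul _).measurable)

variable [FiniteDimensional ℝ E] [MeasurableSpace E] [BorelSpace E] {μ : Measure E}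
  [μ.IsAddHaarMeasure]

theorem integral_inv_pow_smul_comp {F : Type*} [NormedAddCommGroup F] [NormedSpace ℝ F]
    (G : E → F) (ht : 0 < t) :
    ∫ z, (t ^ finrank ℝ E)⁻¹ • G (t⁻¹ • (y - z)) ∂μ = ∫ z, G z ∂μ := by
  rw [integral_smul, integral_sub_left_eq_self (fun z => G (t⁻¹ • z)),
    μ.integral_comp_inv_smul_of_nonneg G ht.le, smul_smul, inv_mul_cancel₀ (by positivity),
    one_smul]

theorem integral_packet (ht : 0 < t) : ∫ z, packet φ y t z ∂μ = ∫ z, φ z ∂μ := by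
  simp_rw [packet, ← Complex.ofReal_inv, ← Complex.real_smul]
  exact integral_inv_pow_smul_comp φ ht

theorem integral_norm_packet (ht : 0 < t) : ∫ z, ‖packet φ y t z‖ ∂μ = ∫ z, ‖φ z‖ ∂μ := by
  simp_rw [norm_packet ht, ← smul_eq_mul]
  exact integral_inv_pow_smul_comp (fun z => ‖φ z‖) ht

theorem integrable_packet (hφ : Integrable φ μ) (ht : t ≠ 0) : Integrable (packet φ y t) μ :=
  ((hφ.comp_smul (inv_ne_zero ht)).comp_sub_left y).const_mul _

theorem norm_integral_packet_mul_conj_packet_le {ω : ℝ → ℝ} (hω : IsSubadditiveModulus ω)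
    {φ' : E → ℂ} {y' : E} {t' B : ℝ} (ht : 0 < t) (htt' : t ≤ t')
    (hφ : Integrable φ μ) (hφ0 : ∫ z, φ z ∂μ = 0) (hφs : ∀ z, φ z ≠ 0 → ‖z‖ ≤ 1)
    (hφ'm : Measurable φ') (hφ'b : ∀ z, ‖φ' z‖ ≤ B)
    (hφ'ω : ∀ z z', ‖φ' z - φ' z'‖ ≤ ω ‖z - z'‖) :
    ‖∫ z, packet φ y t z * conj (packet φ' y' t' z) ∂μ‖ ≤
      (∫ z, ‖φ z‖ ∂μ) * ((t' ^ finrank ℝ E)⁻¹ * (3 * ω (t / t'))) := by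
  have ht' : 0 < t' := ht.trans_le htt'
  have hint : Integrable (fun z => packet φ y t z * conj (packet φ' y' t' z)) μ :=
    (integrable_packet hφ ht.ne').mul_bdd
      (Complex.continuous_conj.measurable.comp (measurable_packet hφ'm)).aestronglyMeasurable
      (ae_of_all _ fun z => (RCLike.norm_conj _).trans_le (norm_packet_le ht' hφ'b z))
  have hosc : ∀ z, packet φ y t z ≠ 0 →
      ‖conj (packet φ' y' t' z) - conj (packet φ' y' t' y)‖ ≤
        (t' ^ finrank ℝ E)⁻¹ * (3 * ω (t / t')) := fun z hz => by
    have hyz := norm_sub_le_of_packet_ne_zero hφs ht hz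
    rw [← map_sub, RCLike.norm_conj]
    refine (norm_packet_sub_packet_le ht' hφ'ω z y).trans ?_
    gcongr
    exact hω.le_three_mul (by positivity) (by rw [norm_sub_rev]; gcongr)
  have := norm_integral_mul_le_of_integral_eq_zero _ (integrable_packet hφ ht.ne')
    (by rw [integral_packet ht, hφ0]) hint hosc
  rwa [integral_norm_packet ht] at this

end Packet

theorem statement12_general (d : ℕ) (hd : 1 ≤ d) (ω : ℝ → ℝ)
    (hω0 : ∀ t : ℝ, 0 ≤ t → 0 ≤ ω t)
    (hsub : ∀ u s t : ℝ, 0 ≤ u → 0 ≤ s → 0 ≤ t → u ≤ s + t → ω u ≤ ω s + ω t) :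
    ∃ C : ℝ, 0 < C ∧
      ∀ (t t' : ℝ) (y y' : EuclideanSpace ℝ (Fin d))
        (φ φ' : EuclideanSpace ℝ (Fin d) → ℂ),
        0 < t → t ≤ t' →
        Measurable φ → (∫ z, φ z) = 0 → (∀ z, φ z ≠ 0 → ‖z‖ ≤ 1) →
        (∀ z z', ‖φ z - φ z'‖ ≤ ω ‖z - z'‖) →
        Measurable φ' → (∫ z, φ' z) = 0 → (∀ z, φ' z ≠ 0 → ‖z‖ ≤ 1) →
        (∀ z z', ‖φ' z - φ' z'‖ ≤ ω ‖z - z'‖) →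
        ‖∫ z : EuclideanSpace ℝ (Fin d),
            (((t ^ d : ℝ)⁻¹ : ℂ) * φ (t⁻¹ • (y - z))) *
              (starRingEnd ℂ) (((t' ^ d : ℝ)⁻¹ : ℂ) * φ' (t'⁻¹ • (y' - z)))‖
          ≤ C * t' ^ (-(d : ℝ)) * ω (t / t') := by
  have : NeZero d := ⟨by omega⟩
  set V := volume.real (closedBall (0 : EuclideanSpace ℝ (Fin d)) 1)
  have hω3 := hω0 3 (by norm_num)
  refine ⟨3 * ω 3 * V + 1, by positivity, ?_⟩
  intro t t' y y' φ φ' ht htt' hφm hφ0 hφs hφω hφ'm _ hφ's hφ'ω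
  have ht' : 0 < t' := ht.trans_le htt'
  have hωtt' := hω0 (t / t') (by positivity)
  have hφb := norm_le_of_modulus hφs hφω
  have key := norm_integral_packet_mul_conj_packet_le (μ := volume) hsub ht htt'
    (integrable_of_norm_le_of_support_unitBall hφm.aestronglyMeasurable hφs hφb) hφ0 hφs
    hφ'm (norm_le_of_modulus hφ's hφ'ω) hφ'ω (y := y) (y' := y')
  simp only [packet, finrank_euclideanSpace_fin] at key
  rw [Real.rpow_neg ht'.le, Real.rpow_natCast]
  calc _ ≤ _ := key
    _ ≤ (ω 3 * V) * ((t' ^ d)⁻¹ * (3 * ω (t / t'))) := by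
        gcongr
        exact integral_norm_le_of_support_unitBall hφs hφb
    _ = 3 * ω 3 * V * (t' ^ d)⁻¹ * ω (t / t') := by ring
    _ ≤ (3 * ω 3 * V + 1) * (t' ^ d)⁻¹ * ω (t / t') := by gcongr; linarith

/-- almost orthogonality of `L¹`-normalized mean-zero wave packets
`φ_{y,t}(z) = t^{−d} φ((y−z)/t)` adapted to a Dini modulus of continuity `ω`. -/
theorem statement12 (d : ℕ) (hd : 1 ≤ d) (ω : ℝ → ℝ)
    (hω0 : ∀ t : ℝ, 0 ≤ t → 0 ≤ ω t)
    (hsub : ∀ u s t : ℝ, 0 ≤ u → 0 ≤ s → 0 ≤ t → u ≤ s + t → ω u ≤ ω s + ω t)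
    (hDini : IntegrableOn (fun t => ω t / t) (Set.Ioc (0 : ℝ) 1)) :
    ∃ C : ℝ, 0 < C ∧
      ∀ (t t' : ℝ) (y y' : EuclideanSpace ℝ (Fin d))
        (φ φ' : EuclideanSpace ℝ (Fin d) → ℂ),
        0 < t → t ≤ t' →
        Measurable φ → (∫ z, φ z) = 0 → (∀ z, φ z ≠ 0 → ‖z‖ ≤ 1) →
        (∀ z z', ‖φ z - φ z'‖ ≤ ω ‖z - z'‖) →
        Measurable φ' → (∫ z, φ' z) = 0 → (∀ z, φ' z ≠ 0 → ‖z‖ ≤ 1) →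
        (∀ z z', ‖φ' z - φ' z'‖ ≤ ω ‖z - z'‖) →
        ‖∫ z : EuclideanSpace ℝ (Fin d),
            (((t ^ d : ℝ)⁻¹ : ℂ) * φ (t⁻¹ • (y - z))) *
              (starRingEnd ℂ) (((t' ^ d : ℝ)⁻¹ : ℂ) * φ' (t'⁻¹ • (y' - z)))‖
          ≤ C * t' ^ (-(d : ℝ)) * ω (t / t') :=
  statement12_general d hd ω hω0 hsub
end
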